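/- arXiv:2211.16545 — 13 statements merged into one kernel-verified Lean document; each statement's English description precedes it below -/
import Mathlib

section
/- Let X be a Tychonoff (completely regular Hausdorff) realcompact space and let A be a subset of X whose closure in X is not compact. Then A contains a countably infinite subset N that is closed in X, discrete, and C-embedded in X. -/
open Set Topology

universe u

/-- A topological space is *realcompact* if it admits a closed embedding into a power
of the real line. -/
def Realcompact (X : Type u) [TopologicalSpace X] : Prop :=
  ∃ (ι : Type u) (f : X → ι → ℝ), Topology.IsClosedEmbedding f
/-- A subset `A` of a topological space `X` is *C-embedded* if every continuous
real-valued function on `A` extends to a continuous real-valued function on `X`. -/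
def CEmbedded {X : Type*} [TopologicalSpace X] (A : Set X) : Prop :=
  ∀ f : C(A, ℝ), ∃ g : C(X, ℝ), ∀ a : A, g ↑a = f a

/-- A subset `A` of a topological space `X` is *C*-embedded* if every *bounded* continuous
real-valued function on `A` extends to a continuous real-valued function on `X`. -/
def CstarEmbedded {X : Type*} [TopologicalSpace X] (A : Set X) : Prop :=
  ∀ f : C(A, ℝ), (∃ M : ℝ, ∀ a : A, |f a| ≤ M) → ∃ g : C(X, ℝ), ∀ a : A, g ↑a = f a

/-!
The closed embedding `e : X → ℝ^ι` maps `closure A` onto a closed set, so if every coordinate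
were bounded on `A` this image would lie in a compact box. Hence some continuous `f : X → ℝ` is
unbounded on `A`, and we can pick points `aₙ ∈ A` whose values `f aₙ` are `1`-separated. Then
`n ↦ f aₙ` is a closed embedding of `ℕ` into `ℝ`, which forces `n ↦ aₙ` to be a closed embedding
into the Hausdorff space `X`; a continuous function on `{aₙ}` extends by Tietze's theorem on `ℝ`,
composed with `f`.
-/

theorem Realcompact.t2Space {X : Type u} [TopologicalSpace X] (hX : Realcompact X) :
    T2Space X := by
  obtain ⟨ι, e, he⟩ := hX
  exact he.isEmbedding.t2Space

theorem Realcompact.exists_not_bddAbove_image {X : Type u} [TopologicalSpace X]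
    (hX : Realcompact X) {A : Set X} (hA : ¬ IsCompact (closure A)) :
    ∃ f : C(X, ℝ), ¬ BddAbove (f '' A) := by
  obtain ⟨ι, e, he⟩ := hX
  by_contra! hbdd
  choose M hM using fun i =>
    hbdd ⟨fun x => |e x i|, (continuous_apply i |>.comp he.continuous).abs⟩
  have hAbox : e '' A ⊆ univ.pi fun i => Icc (-M i) (M i) := by
    rintro _ ⟨x, hx, rfl⟩ i -
    exact abs_le.mp (hM i ⟨x, hx, rfl⟩)
  have hbox_closed : IsClosed (univ.pi fun i => Icc (-M i) (M i)) :=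
    isClosed_set_pi fun i _ => isClosed_Icc
  apply hA
  rw [he.isEmbedding.isCompact_iff]
  refine (isCompact_univ_pi fun i => isCompact_Icc (a := -M i) (b := M i)).of_isClosed_subset
    (he.isClosedMap _ isClosed_closure) ?_
  exact (image_closure_subset_closure_image he.continuous).trans
    (closure_minimal hAbox hbox_closed)

theorem exists_seq_mem_add_one_lt_of_not_bddAbove {X : Type*} {f : X → ℝ} {A : Set X}
    (hA : ¬ BddAbove (f '' A)) :
    ∃ a : ℕ → X, (∀ n, a n ∈ A) ∧ ∀ n, f (a n) + 1 < f (a (n + 1)) := by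
  have hunbdd : ∀ M, ∃ x ∈ A, M < f x := by simpa [not_bddAbove_iff] using hA
  choose c hcA hc using hunbdd
  refine ⟨fun n => Nat.rec (c 0) (fun _ x => c (f x + 1)) n, fun n => ?_, fun n => hc _⟩
  cases n <;> exact hcA _

theorem pairwise_one_le_dist_of_add_one_le {u : ℕ → ℝ} (hu : ∀ n, u n + 1 ≤ u (n + 1)) :
    Pairwise fun m n => 1 ≤ dist (u m) (u n) := by
  have hmono : Monotone fun n : ℕ => u n - n := monotone_nat_of_le_succ fun n => by
    push_cast; linarith [hu n]
  have hlt {m n : ℕ} (hmn : m < n) : 1 ≤ dist (u n) (u m) := by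
    have h1 : (m : ℝ) + 1 ≤ n := by exact_mod_cast hmn
    have h2 : u m - m ≤ u n - n := hmono hmn.le
    rw [Real.dist_eq]
    exact (by linarith : 1 ≤ u n - u m).trans (le_abs_self _)
  intro m n hmn
  rcases hmn.lt_or_gt with h | h
  · exact dist_comm (u n) (u m) ▸ hlt h
  · exact hlt h

theorem Topology.IsClosedEmbedding.of_comp_of_t2 {Z X Y : Type*} [TopologicalSpace Z]
    [TopologicalSpace X] [TopologicalSpace Y] [T2Space X] {a : Z → X} {f : X → Y}
    (ha : Continuous a) (hf : Continuous f) (hfa : IsClosedEmbedding (f ∘ a)) :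
    IsClosedEmbedding a :=
  .of_continuous_injective_isClosedMap ha hfa.injective.of_comp
    (isProperMap_of_comp_of_t2 ha hf hfa.isProperMap).isClosedMap

theorem cEmbedded_range_of_isClosedEmbedding_comp {Z X Y : Type*} [TopologicalSpace Z]
    [TopologicalSpace X] [TopologicalSpace Y] [NormalSpace Y] {a : Z → X} {f : C(X, Y)}
    (ha : Continuous a) (hfa : IsClosedEmbedding (f ∘ a)) : CEmbedded (range a) := by
  intro g
  obtain ⟨G, hG⟩ := ContinuousMap.exists_extension hfa
    (g.comp ⟨rangeFactorization a, ha.rangeFactorization⟩)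
  refine ⟨G.comp f, ?_⟩
  rintro ⟨_, z, rfl⟩
  exact DFunLike.congr_fun hG z

theorem statement0_general {X : Type u} [TopologicalSpace X]
    (hX : Realcompact X) (A : Set X) (hA : ¬ IsCompact (closure A)) :
    ∃ N : Set X, N ⊆ A ∧ N.Countable ∧ N.Infinite ∧ IsClosed N ∧ DiscreteTopology N ∧
      CEmbedded N := by
  have := hX.t2Space
  obtain ⟨f, hf⟩ := hX.exists_not_bddAbove_image hA
  obtain ⟨a, haA, hfa⟩ := exists_seq_mem_add_one_lt_of_not_bddAbove hf
  have hfa_emb : IsClosedEmbedding (f ∘ a) :=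
    Metric.isClosedEmbedding_of_pairwise_le_dist one_pos
      (pairwise_one_le_dist_of_add_one_le fun n => (hfa n).le)
  have ha : IsClosedEmbedding a :=
    .of_comp_of_t2 continuous_of_discreteTopology f.continuous hfa_emb
  refine ⟨range a, range_subset_iff.mpr haA, countable_range a,
    infinite_range_of_injective ha.injective, ha.isClosed_range, ?_,
    cEmbedded_range_of_isClosedEmbedding_comp ha.continuous hfa_emb⟩
  exact ha.isEmbedding.toHomeomorph.discreteTopology_iff.mp inferInstance

/-- In a Tychonoff realcompact space `X`, every subset `A` whose closure is
not compact contains a countably infinite subset that is closed in `X`, discrete, and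
C-embedded in `X`. -/
theorem statement0 {X : Type u} [TopologicalSpace X] [T2Space X] [CompletelyRegularSpace X]
    (hX : Realcompact X) (A : Set X) (hA : ¬ IsCompact (closure A)) :
    ∃ N : Set X, N ⊆ A ∧ N.Countable ∧ N.Infinite ∧ IsClosed N ∧ DiscreteTopology N ∧
      CEmbedded N :=
  statement0_general hX A hA
end

section
/- Let X be a Tychonoff (completely regular Hausdorff) space and let N₁ and N₂ be closed copies of ℕ in X, each of which is C-embedded in X. Then N₁ ∪ N₂ is C-embedded in X. -/
open Set Topology

/-- `N` is a *closed copy of ℕ* in `X`: a countably infinite closed subset all of whose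
points are isolated in the subspace topology. -/
def ClosedCopyOfNat {X : Type*} [TopologicalSpace X] (N : Set X) : Prop :=
  N.Countable ∧ N.Infinite ∧ IsClosed N ∧ DiscreteTopology N

/-!
Extend `f` from `N₁` to some `g`. On `N₂` the error `f - g` must be corrected without disturbing
`N₁ \ N₂`. Since `N₁` is closed and discrete, `N₁ \ N₂` is closed, and complete regularity gives,
for each of the countably many points of `N₂`, a function vanishing on `N₁ \ N₂` but not at that
point; a weighted series of these is a continuous `k` with zero set containing `N₁ \ N₂` and missing
`N₂`. Then `g + k * h`, with `h` extending `(f - g) / k` from `N₂`, extends `f`.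
-/

section CozeroSets

variable {X : Type*} [TopologicalSpace X]

theorem exists_continuous_eq_zero_iff_forall_eq_zero {ι : Type*} [Countable ι]
    {g : ι → X → ℝ} (hg : ∀ i, Continuous (g i)) (hg₀ : ∀ i x, 0 ≤ g i x)
    (hg₁ : ∀ i x, g i x ≤ 1) : ∃ k : C(X, ℝ), ∀ x, k x = 0 ↔ ∀ i, g i x = 0 := by
  have := Encodable.ofCountable ι
  obtain ⟨w, hw, _, hw_sum, -⟩ := posSumOfEncodable one_pos ι
  have hterm₀ : ∀ i x, 0 ≤ w i * g i x := fun i x => mul_nonneg (hw i).le (hg₀ i x)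
  have hterm₁ : ∀ i x, w i * g i x ≤ w i := fun i x =>
    mul_le_of_le_one_right (hw i).le (hg₁ i x)
  have hcont : Continuous fun x => ∑' i, w i * g i x :=
    continuous_tsum (fun i => continuous_const.mul (hg i)) hw_sum.summable fun i x => by
      rw [Real.norm_of_nonneg (hterm₀ i x)]
      exact hterm₁ i x
  refine ⟨⟨_, hcont⟩, fun x => ⟨fun hx i => ?_, fun hx => by simp [hx]⟩⟩
  by_contra hi
  have hpos : 0 < w i * g i x := mul_pos (hw i) ((hg₀ i x).lt_of_ne' hi)
  have hsum : Summable fun i => w i * g i x :=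
    hw_sum.summable.of_nonneg_of_le (hterm₀ · x) (hterm₁ · x)
  exact (hsum.tsum_pos (hterm₀ · x) i hpos).ne' hx

theorem exists_continuous_eq_zero_on_isClosed_ne_zero_on_countable
    [CompletelyRegularSpace X] {D N : Set X} (hD : IsClosed D) (hN : N.Countable)
    (hDN : Disjoint D N) : ∃ k : C(X, ℝ), (∀ x ∈ D, k x = 0) ∧ ∀ x ∈ N, k x ≠ 0 := by
  have := hN.to_subtype
  choose φ hφ hφ_pt hφ_D using fun y : N =>
    CompletelyRegularSpace.completely_regular y.1 D hD (hDN.notMem_of_mem_right y.2)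
  obtain ⟨k, hk⟩ := exists_continuous_eq_zero_iff_forall_eq_zero (g := fun y x => 1 - (φ y x : ℝ))
    (fun y => continuous_const.sub (continuous_subtype_val.comp (hφ y)))
    (fun y x => by simp [(φ y x).2.2]) (fun y x => by simp [(φ y x).2.1])
  refine ⟨k, fun x hx => (hk x).2 fun y => by simp [hφ_D y hx], fun x hx h => ?_⟩
  simpa [hφ_pt] using (hk x).1 h ⟨x, hx⟩

end CozeroSets

theorem CEmbedded.union {X : Type*} [TopologicalSpace X] {A B : Set X} (hA : CEmbedded A)
    (hB : CEmbedded B) (k : C(X, ℝ)) (hk_diff : ∀ x ∈ A \ B, k x = 0)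
    (hk_B : ∀ x ∈ B, k x ≠ 0) : CEmbedded (A ∪ B) := by
  intro f
  obtain ⟨g, hg⟩ := hA (f.comp (ContinuousMap.inclusion subset_union_left))
  let q : C(B, ℝ) := ⟨fun b => (f ⟨b, Or.inr b.2⟩ - g b) / k b,
    ((f.continuous.comp (ContinuousMap.inclusion subset_union_right).continuous).sub
      (g.continuous.comp continuous_subtype_val)).div
      (k.continuous.comp continuous_subtype_val) fun b => hk_B b b.2⟩
  have hkq : ∀ b : B, k b * q b = f ⟨b, Or.inr b.2⟩ - g b := fun b =>
    mul_div_cancel₀ _ (hk_B b b.2)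
  obtain ⟨h, hh⟩ := hB q
  refine ⟨g + k * h, fun ⟨x, hx⟩ => ?_⟩
  by_cases hxB : x ∈ B
  · calc (g + k * h) x = g x + k x * q ⟨x, hxB⟩ := by simp [hh ⟨x, hxB⟩]
      _ = f ⟨x, hx⟩ := by rw [hkq ⟨x, hxB⟩]; ring
  · have hxA : x ∈ A := hx.resolve_right hxB
    calc (g + k * h) x = g x := by simp [hk_diff x ⟨hxA, hxB⟩]
      _ = f ⟨x, hx⟩ := hg ⟨x, hxA⟩

theorem statement1_general {X : Type*} [TopologicalSpace X] [CompletelyRegularSpace X]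
    {N₁ N₂ : Set X} (h₁ : ClosedCopyOfNat N₁) (h₂ : ClosedCopyOfNat N₂)
    (hc₁ : CEmbedded N₁) (hc₂ : CEmbedded N₂) :
    CEmbedded (N₁ ∪ N₂) := by
  obtain ⟨-, -, hN₁_closed, hN₁_discrete⟩ := h₁
  obtain ⟨hN₂_countable, -⟩ := h₂
  have hD : IsClosed (N₁ \ N₂) :=
    isClosed_of_subset_discrete_closed sdiff_subset ⟨hN₁_discrete⟩ hN₁_closed
  obtain ⟨k, hk_diff, hk_N₂⟩ := exists_continuous_eq_zero_on_isClosed_ne_zero_on_countable hD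
    hN₂_countable disjoint_sdiff_left
  exact hc₁.union hc₂ k hk_diff hk_N₂

/-- In a Tychonoff space, the union of two C-embedded closed copies of `ℕ`
is C-embedded. -/
theorem statement1 {X : Type*} [TopologicalSpace X] [T2Space X] [CompletelyRegularSpace X]
    {N₁ N₂ : Set X} (h₁ : ClosedCopyOfNat N₁) (h₂ : ClosedCopyOfNat N₂)
    (hc₁ : CEmbedded N₁) (hc₂ : CEmbedded N₂) :
    CEmbedded (N₁ ∪ N₂) :=
  statement1_general h₁ h₂ hc₁ hc₂
end

section
/- Let X be a Tychonoff (completely regular Hausdorff) space, let N₁ be a closed copy of ℕ in X that is C-embedded in X, and let N₂ be a closed copy of ℕ in X that is C*-embedded in X. Then N₁ ∪ N₂ is C*-embedded in X. -/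
open Set Topology

/-! The set `N₁` is countable and C-embedded, and `N₂ \ N₁` is closed, being a subset of a closed
discrete set. In a completely regular space the sum `∑ 2⁻ⁿ fₙ` of separating functions for the
points of `N₁` is continuous, positive on `N₁` and zero on `N₂ \ N₁`; multiplying it by an
extension of its reciprocal on `N₁` gives `φ` with `φ = 1` on `N₁` and `φ = 0` on `N₂ \ N₁`.
A bounded `f` on `N₁ ∪ N₂` then extends as `g + k φ`, where `g` extends `f` from `N₂` and `k`
extends `f - g` from `N₁`. -/

section

variable {X : Type*} [TopologicalSpace X]

theorem IsClosed.of_subset_of_discreteTopology {s t : Set X} (hs : IsClosed s)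
    [DiscreteTopology s] (hts : t ⊆ s) : IsClosed t := by
  rw [← inter_eq_self_of_subset_right hts, ← Subtype.image_preimage_val]
  exact hs.isClosedMap_subtype_val _ (isClosed_discrete _)

theorem exists_continuous_pos_on_of_countable [CompletelyRegularSpace X] {E F : Set X}
    (hE : E.Countable) (hF : IsClosed F) (hEF : Disjoint E F) :
    ∃ s : C(X, ℝ), (∀ x ∈ E, 0 < s x) ∧ EqOn s 0 F := by
  have := hE.to_subtype
  obtain ⟨ι, hι⟩ := Countable.exists_injective_nat E
  choose c hc hcE hcF using fun e : E ↦
    CompletelyRegularSpace.completely_regular (e : X) F hF (hEF.notMem_of_mem_left e.2)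
  set u : E → X → ℝ := fun e x ↦ (1 / 2) ^ ι e * unitInterval.symm (c e x)
  have hu_nonneg (e : E) (x : X) : 0 ≤ u e x :=
    mul_nonneg (by positivity) (unitInterval.nonneg _)
  have hu_le (e : E) (x : X) : u e x ≤ (1 / 2) ^ ι e :=
    mul_le_of_le_one_right (by positivity) (unitInterval.le_one _)
  have hsum : Summable fun e : E ↦ ((1 : ℝ) / 2) ^ ι e := summable_geometric_two.comp_injective hι
  have hu_cont (e : E) : Continuous (u e) := by
    have := hc e
    unfold u
    fun_prop
  refine ⟨⟨fun x ↦ ∑' e, u e x, continuous_tsum hu_cont hsum fun e x ↦ ?_⟩, fun x hx ↦ ?_,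
    fun y hy ↦ ?_⟩
  · rw [Real.norm_of_nonneg (hu_nonneg e x)]
    exact hu_le e x
  · refine (hsum.of_nonneg_of_le (hu_nonneg · x) (hu_le · x)).tsum_pos (hu_nonneg · x) ⟨x, hx⟩ ?_
    simp [u, hcE ⟨x, hx⟩]
  · simp [u, hcF _ hy]

theorem CEmbedded.exists_eqOn_one_eqOn_zero [CompletelyRegularSpace X] {E F : Set X}
    (hE : CEmbedded E) (hEc : E.Countable) (hF : IsClosed F) (hEF : Disjoint E F) :
    ∃ φ : C(X, ℝ), EqOn φ 1 E ∧ EqOn φ 0 F := by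
  obtain ⟨s, hs_pos, hs_zero⟩ := exists_continuous_pos_on_of_countable hEc hF hEF
  obtain ⟨g, hg⟩ := hE ⟨fun x ↦ (s x)⁻¹,
    (s.restrict E).continuous.inv₀ fun x ↦ (hs_pos x x.2).ne'⟩
  refine ⟨s * g, fun x hx ↦ ?_, fun x hx ↦ ?_⟩
  · have hgx : g x = (s x)⁻¹ := hg ⟨x, hx⟩
    simpa [hgx] using mul_inv_cancel₀ (hs_pos x hx).ne'
  · simp [hs_zero hx]

theorem CEmbedded.cstarEmbedded_union {A B : Set X} (hA : CEmbedded A) (hB : CstarEmbedded B)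
    (φ : C(X, ℝ)) (hφA : EqOn φ 1 A) (hφB : EqOn φ 0 (B \ A)) : CstarEmbedded (A ∪ B) := by
  rintro f ⟨M, hM⟩
  obtain ⟨g, hg⟩ := hB (f.comp (ContinuousMap.inclusion subset_union_right)) ⟨M, fun _ ↦ hM _⟩
  obtain ⟨k, hk⟩ := hA (f.comp (ContinuousMap.inclusion subset_union_left) - g.restrict A)
  refine ⟨g + k * φ, ?_⟩
  rintro ⟨x, hx⟩
  by_cases hxA : x ∈ A
  · have hkx : k x = f ⟨x, hx⟩ - g x := hk ⟨x, hxA⟩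
    simp only [ContinuousMap.add_apply, ContinuousMap.mul_apply, hkx, hφA hxA, Pi.one_apply]
    ring
  · have hxB := hx.resolve_left hxA
    have hgx : g x = f ⟨x, hx⟩ := hg ⟨x, hxB⟩
    simp only [ContinuousMap.add_apply, ContinuousMap.mul_apply, hφB ⟨hxB, hxA⟩, Pi.zero_apply,
      mul_zero, add_zero, hgx]

end

theorem statement2_general {X : Type*} [TopologicalSpace X] [CompletelyRegularSpace X]
    {N₁ N₂ : Set X} (h₁ : ClosedCopyOfNat N₁) (h₂ : ClosedCopyOfNat N₂)
    (hc₁ : CEmbedded N₁) (hc₂ : CstarEmbedded N₂) :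
    CstarEmbedded (N₁ ∪ N₂) := by
  obtain ⟨hN₁, -, -, -⟩ := h₁
  obtain ⟨-, -, hN₂, hdisc⟩ := h₂
  obtain ⟨φ, hφ₁, hφ₂⟩ := hc₁.exists_eqOn_one_eqOn_zero hN₁
    (hN₂.of_subset_of_discreteTopology sdiff_subset) disjoint_sdiff_right
  exact hc₁.cstarEmbedded_union hc₂ φ hφ₁ hφ₂

/-- In a Tychonoff space, the union of a C-embedded closed copy of `ℕ` and a
C*-embedded closed copy of `ℕ` is C*-embedded. -/
theorem statement2 {X : Type*} [TopologicalSpace X] [T2Space X] [CompletelyRegularSpace X]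
    {N₁ N₂ : Set X} (h₁ : ClosedCopyOfNat N₁) (h₂ : ClosedCopyOfNat N₂)
    (hc₁ : CEmbedded N₁) (hc₂ : CstarEmbedded N₂) :
    CstarEmbedded (N₁ ∪ N₂) :=
  statement2_general h₁ h₂ hc₁ hc₂
end

section
/- For every continuous function f : J → ℝ there is a countable set S ⊆ ω₁ such that (i) f(α, n) = f(∞₁, n) for every α ∈ ω₁ \ S and every n ∈ ℕ, and (ii) f is constant on the set (ω₁ \ S) × {∞₀}. -/
open Set Topology

/-- `ω₁`, the set of countable ordinals, as a type carrying the discrete topology. -/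
def W1 : Type := (Cardinal.aleph 1).ord.ToType

instance : TopologicalSpace W1 := ⊥
instance : DiscreteTopology W1 := ⟨rfl⟩

/-- The plank `J`: the product of the one-point compactifications of the discrete spaces
`ω₁` and `ℕ`, with the corner point `(∞₁, ∞₀)` removed. -/
abbrev J : Type := {p : OnePoint W1 × OnePoint ℕ // p ≠ (OnePoint.infty, OnePoint.infty)}

/-- The point `(α, n)` of `J`, for `α ∈ ω₁` and `n ∈ ℕ`. -/
def Jmk (α : W1) (n : ℕ) : J :=
  ⟨(↑α, ↑n), fun h => OnePoint.coe_ne_infty α (congrArg Prod.fst h)⟩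

/-- The point `(α, ∞₀)` of the top line `T = ω₁ × {∞₀}` of `J`. -/
def JmkTop (α : W1) : J :=
  ⟨(↑α, OnePoint.infty), fun h => OnePoint.coe_ne_infty α (congrArg Prod.fst h)⟩

/-- The point `(∞₁, n)` of the right-hand side `R = {∞₁} × ℕ` of `J`. -/
def JmkRight (n : ℕ) : J :=
  ⟨(OnePoint.infty, ↑n), fun h => OnePoint.coe_ne_infty n (congrArg Prod.snd h)⟩

/-!
Each row `x ↦ f(x, n)` is a continuous function on the one-point compactification `ω₁⁺` of a
discrete space, so it tends to `f(∞₁, n)` along the cofinite filter of `ω₁`; as `ℝ` is first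
countable and T1, it differs from `f(∞₁, n)` at only countably many `α`. Off the countable union
`S` of these exceptional sets, the column of `α` coincides with the right edge, so
`f(α, ∞₀) = lim_n f(∞₁, n)` does not depend on `α`. Since `ω₁` is uncountable, `S ≠ ω₁`.
-/

open Filter OnePoint

theorem OnePoint.countable_setOf_ne_infty {X Y : Type*} [TopologicalSpace X] [DiscreteTopology X]
    [TopologicalSpace Y] [T1Space Y] [FirstCountableTopology Y] {g : OnePoint X → Y}
    (hg : Continuous g) : {x : X | g x ≠ g ∞}.Countable := by
  have h := ((continuous_iff_from_discrete g).mp hg).countable_compl_preimage_ker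
  rwa [ker_nhds] at h

instance : Uncountable W1 := by
  rw [← Cardinal.aleph0_lt_mk_iff, W1, Cardinal.mk_ord_toType]
  exact Cardinal.aleph0_lt_aleph_one

def Jrow (n : ℕ) (x : OnePoint W1) : J :=
  ⟨(x, n), fun h => coe_ne_infty n (congrArg Prod.snd h)⟩

def Jcol (α : W1) (y : OnePoint ℕ) : J :=
  ⟨(α, y), fun h => coe_ne_infty α (congrArg Prod.fst h)⟩

theorem continuous_Jrow (n : ℕ) : Continuous (Jrow n) :=
  (continuous_id.prodMk continuous_const).subtype_mk _

theorem continuous_Jcol (α : W1) : Continuous (Jcol α) :=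
  (continuous_const.prodMk continuous_id).subtype_mk _

theorem tendsto_Jmk_atTop (α : W1) : Tendsto (Jmk α) atTop (𝓝 (JmkTop α)) :=
  (continuous_iff_from_nat _).mp (continuous_Jcol α)

/-- For every continuous `f : J → ℝ` there is a countable `S ⊆ ω₁` such that
`f(α, n) = f(∞₁, n)` for all `α ∉ S` and `n ∈ ℕ`, and `f` is constant on `(ω₁ \ S) × {∞₀}`. -/
theorem statement3 (f : C(J, ℝ)) :
    ∃ S : Set W1, S.Countable ∧
      (∀ α : W1, α ∉ S → ∀ n : ℕ, f (Jmk α n) = f (JmkRight n)) ∧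
      (∃ c : ℝ, ∀ α : W1, α ∉ S → f (JmkTop α) = c) := by
  set S : Set W1 := ⋃ n : ℕ, {α | f (Jmk α n) ≠ f (JmkRight n)}
  have hS : S.Countable :=
    countable_iUnion fun n => countable_setOf_ne_infty (f.continuous.comp (continuous_Jrow n))
  have hrow (α : W1) (hα : α ∉ S) (n : ℕ) : f (Jmk α n) = f (JmkRight n) :=
    not_not.mp fun h => hα (mem_iUnion.mpr ⟨n, h⟩)
  have htop (α : W1) (hα : α ∉ S) :
      Tendsto (fun n => f (JmkRight n)) atTop (𝓝 (f (JmkTop α))) :=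
    funext (hrow α hα) ▸ (f.continuous.tendsto _).comp (tendsto_Jmk_atTop α)
  obtain ⟨α₀, hα₀⟩ : Sᶜ.Nonempty := nonempty_compl.mpr fun h => not_countable_univ (h ▸ hS)
  exact ⟨S, hS, hrow, f (JmkTop α₀), fun α hα => tendsto_nhds_unique (htop α hα) (htop α₀ hα₀)⟩
end

section
/- The plank J is not realcompact: there do not exist an index set ι and a closed embedding of J into ℝ^ι (with the product topology). -/
open Set Topology

universe u

/-! For every continuous `h : J → ℝ` there is a `c` such that `h (∞₁, n) → c` and `h (α, ∞₀) = c`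
for all but countably many `α`. Applied coordinatewise to `f : J → ℝ^ι` this gives one point
`c ∈ ℝ^ι` that is a limit of `f` both along the right edge `{∞₁} × ℕ` and, along the cocountable
filter, along the top line `ω₁ × {∞₀}`. Both edges are closed in `J`, so if `f` were a closed
embedding, `c` would be the image of a point lying on both of them; but they are disjoint. -/

open Filter Cardinal

instance inst_s6 : Uncountable W1 :=
  aleph0_lt_mk_iff.mp (by rw [W1, mk_ord_toType]; exact aleph0_lt_aleph_one)

instance : (cocountable : Filter W1).NeBot :=
  frequently_true_iff_neBot _ |>.mp <| frequently_cocardinal.mpr <| by simp [W1]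

lemma Filter.Tendsto.eventually_cocountable_eq {X Y : Type*} [TopologicalSpace Y] [T1Space Y]
    [FirstCountableTopology Y] {u : X → Y} {y : Y} (h : Tendsto u cofinite (𝓝 y)) :
    ∀ᶠ x in cocountable, u x = y :=
  mem_cocountable.mpr <| by
    have := h.countable_compl_preimage_ker
    rwa [ker_nhds] at this

lemma continuous_column (α : W1) : Continuous fun y : OnePoint ℕ => (⟨((α : OnePoint W1), y),
    fun h => OnePoint.coe_ne_infty α (congrArg Prod.fst h)⟩ : J) :=
  (continuous_const.prodMk continuous_id).subtype_mk _

lemma continuous_row (n : ℕ) : Continuous fun x : OnePoint W1 => (⟨(x, (n : OnePoint ℕ)),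
    fun h => OnePoint.coe_ne_infty n (congrArg Prod.snd h)⟩ : J) :=
  (continuous_id.prodMk continuous_const).subtype_mk _

/-- Each row `ω₁ × {n}` is eventually equal to `h (∞₁, n)`, so some column `α₀` agrees with the
right edge everywhere; uniqueness of limits then forces every such column to end at the same
point `h (α₀, ∞₀)`. -/
lemma exists_tendsto_right_eventually_top_eq {Y : Type*} [TopologicalSpace Y] [T2Space Y]
    [FirstCountableTopology Y] {h : J → Y} (hc : Continuous h) :
    ∃ c, Tendsto (h ∘ JmkRight) atTop (𝓝 c) ∧ ∀ᶠ α in cocountable, h (JmkTop α) = c := by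
  have hcolumn (α : W1) : Tendsto (fun n => h (Jmk α n)) atTop (𝓝 (h (JmkTop α))) :=
    (OnePoint.continuous_iff_from_nat _).mp (hc.comp (continuous_column α))
  have hrow (n : ℕ) : ∀ᶠ α in cocountable, h (Jmk α n) = h (JmkRight n) :=
    ((OnePoint.continuous_iff_from_discrete _).mp
      (hc.comp (continuous_row n))).eventually_cocountable_eq
  have hrows : ∀ᶠ α in cocountable, ∀ n, h (Jmk α n) = h (JmkRight n) :=
    (eventually_cardinal_forall (c := ℵ₁) (by simp)).mpr hrow
  have hright {α : W1} (hα : ∀ n, h (Jmk α n) = h (JmkRight n)) :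
      Tendsto (h ∘ JmkRight) atTop (𝓝 (h (JmkTop α))) :=
    (hcolumn α).congr hα
  obtain ⟨α₀, hα₀⟩ := hrows.exists
  exact ⟨_, hright hα₀, hrows.mono fun α hα => tendsto_nhds_unique (hright hα) (hright hα₀)⟩

lemma Topology.IsClosedEmbedding.mem_image_of_tendsto {X Y ι : Type*} [TopologicalSpace X]
    [TopologicalSpace Y] {f : X → Y} (hf : IsClosedEmbedding f) {s : Set X} (hs : IsClosed s)
    {l : Filter ι} [l.NeBot] {u : ι → X} {y : Y} (hu : Tendsto (f ∘ u) l (𝓝 y))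
    (hus : ∀ᶠ i in l, u i ∈ s) : y ∈ f '' s :=
  (hf.isClosedMap s hs).mem_of_tendsto hu (hus.mono fun _ hi => mem_image_of_mem f hi)

/-- The plank `J` is not realcompact. -/
theorem statement6 : ¬ Realcompact J := by
  rintro ⟨ι, f, hf⟩
  choose c hright htop using fun i =>
    exists_tendsto_right_eventually_top_eq ((continuous_apply i).comp hf.continuous)
  have hright' : Tendsto (f ∘ JmkRight) atTop (𝓝 c) := tendsto_pi_nhds.mpr hright
  have htop' : Tendsto (f ∘ JmkTop) cocountable (𝓝 c) :=
    tendsto_pi_nhds.mpr fun i => tendsto_const_nhds.congr' ((htop i).mono fun _ h => h.symm)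
  obtain ⟨x, hx, rfl⟩ := hf.mem_image_of_tendsto
    (OnePoint.isClosed_infty.preimage (continuous_fst.comp continuous_subtype_val))
    hright' (Eventually.of_forall fun _ => rfl)
  obtain ⟨y, hy, hxy⟩ := hf.mem_image_of_tendsto
    (OnePoint.isClosed_infty.preimage (continuous_snd.comp continuous_subtype_val))
    htop' (Eventually.of_forall fun _ => rfl)
  exact x.2 (Prod.ext hx (hf.injective hxy ▸ hy))
end

section
/- The right-hand side R = {∞₁} × ℕ of the plank P is C*-embedded in P: every bounded continuous function f : R → ℝ extends to a continuous function P → ℝ (namely, extend n ↦ f(∞₁, n) to its Stone–Čech extension g : βℕ → ℝ and set the extension equal to g(u) at each point (α, u) of P). -/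
open Set Topology

/-- The Stone–Čech compactification `βℕ` of the discrete space `ℕ`. -/
abbrev betaN : Type := StoneCech ℕ

/-- The Stone–Čech remainder `ℕ* = βℕ \ ℕ`. -/
def Nstar : Set betaN := (Set.range (stoneCechUnit : ℕ → betaN))ᶜ

/-- The plank `P`: the subspace `(ω₁⁺ × βℕ) \ ({∞₁} × ℕ*)` of `ω₁⁺ × βℕ`, where `ω₁⁺` is the
one-point compactification of the discrete space `ω₁`. -/
abbrev P : Type :=
  {p : OnePoint W1 × betaN // ¬ (p.1 = OnePoint.infty ∧ p.2 ∈ Nstar)}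

/-- The point `(∞₁, n)` of the right-hand side `R = {∞₁} × ℕ` of `P`. -/
def PmkR (n : ℕ) : P :=
  ⟨(OnePoint.infty, stoneCechUnit n), fun h => h.2 ⟨n, rfl⟩⟩

/-- A bounded `f` takes values in a compact interval, so `a ↦ f (ι a)` extends over `β α`;
composing that extension with `p` extends `f` to `X`. -/
theorem cstarEmbedded_range_of_stoneCech {α X : Type*} [TopologicalSpace α] [DiscreteTopology α]
    [TopologicalSpace X] (ι : α → X) (p : C(X, StoneCech α))
    (hp : ∀ a, p (ι a) = stoneCechUnit a) :
    CstarEmbedded (range ι) := by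
  rintro f ⟨M, hM⟩
  let fι : α → Icc (-M) M := fun a => ⟨f ⟨ι a, a, rfl⟩, abs_le.mp (hM _)⟩
  have hfι : Continuous fι := continuous_of_discreteTopology
  refine ⟨⟨fun x => (stoneCechExtend hfι (p x) : Icc (-M) M),
    continuous_subtype_val.comp ((continuous_stoneCechExtend hfι).comp p.continuous)⟩, ?_⟩
  rintro ⟨_, a, rfl⟩
  change ((stoneCechExtend hfι (p (ι a)) : Icc (-M) M) : ℝ) = fι a
  rw [hp, stoneCechExtend_stoneCechUnit]

/-- The right-hand side `R = {∞₁} × ℕ` of the plank `P` is C*-embedded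
in `P`. -/
theorem statement7 : CstarEmbedded (Set.range PmkR) :=
  cstarEmbedded_range_of_stoneCech PmkR ⟨fun q => q.val.2, by fun_prop⟩ fun _ => rfl
end

section
/- The right-hand side R = ω₁* × ℕ of the plank V is C*-embedded in V: every bounded continuous function f : R → ℝ extends to a continuous function V → ℝ. -/
open Set Topology

/-- The Stone–Čech compactification `βω₁` of the discrete space `ω₁`. -/
abbrev betaW : Type := StoneCech W1

/-- The Stone–Čech remainder `ω₁* = βω₁ \ ω₁`. -/
def W1star : Set betaW := (Set.range (stoneCechUnit : W1 → betaW))ᶜ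

/-- The plank `V`: the subspace `(βω₁ × βℕ) \ (ω₁* × ℕ*)` of `βω₁ × βℕ`. -/
abbrev V : Type := {p : betaW × betaN // ¬ (p.1 ∈ W1star ∧ p.2 ∈ Nstar)}

/-- The right-hand side `R = ω₁* × ℕ` of the plank `V`, as a subset of `V`. -/
def Rside : Set V :=
  {p : V | p.1.1 ∈ W1star ∧ p.1.2 ∈ Set.range (stoneCechUnit : ℕ → betaN)}

/-- The point `(u, n)` of the right-hand side of `V`, for `u ∈ βω₁` and `n ∈ ℕ`. -/
def VmkR (u : betaW) (n : ℕ) : V :=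
  ⟨(u, stoneCechUnit n), fun h => h.2 ⟨n, rfl⟩⟩


/-!
Extend each slice `f(·, n)` from the closed set `ω₁*` to `G n` on `βω₁` by Tietze, keeping the
bound `M`. For fixed `u ∈ βω₁` the bounded sequence `n ↦ G n u` extends to `βℕ`. The resulting
function on `βω₁ × βℕ` is continuous at every point with an isolated coordinate: near `(α, t)` it
depends on `t` alone, and near `(u, n)` it is `G n`. These are exactly the points of the plank.
-/

namespace StoneCech

variable {D : Type*} [TopologicalSpace D] [DiscreteTopology D]

/-- The extended indicator of `x` cuts out a clopen set meeting the dense set of units only in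
`stoneCechUnit x`. -/
theorem isOpen_singleton_stoneCechUnit (x : D) :
    IsOpen ({stoneCechUnit x} : Set (StoneCech D)) := by
  classical
  have hχ : Continuous fun y : D => decide (y = x) := continuous_of_discreteTopology
  set U := stoneCechExtend hχ ⁻¹' {true}
  have hU : IsOpen U := (isOpen_discrete _).preimage (continuous_stoneCechExtend hχ)
  have hUx : U = {stoneCechUnit x} := by
    refine subset_antisymm ?_ (by simp [U, stoneCechExtend_stoneCechUnit])
    calc U ⊆ closure (U ∩ range stoneCechUnit) :=
          denseRange_stoneCechUnit.open_subset_closure_inter hU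
      _ ⊆ closure {stoneCechUnit x} := by
          refine closure_mono ?_
          rintro _ ⟨hz, y, rfl⟩
          have hy : y = x := by simpa [U, stoneCechExtend_stoneCechUnit] using hz
          exact hy ▸ rfl
      _ = {stoneCechUnit x} := closure_singleton
  exact hUx ▸ hU

theorem isOpen_range_stoneCechUnit : IsOpen (range (stoneCechUnit : D → StoneCech D)) := by
  rw [← iUnion_singleton_eq_range]
  exact isOpen_iUnion isOpen_singleton_stoneCechUnit

end StoneCech

section ExtendFamily

variable {X D Z : Type*} [TopologicalSpace X] [TopologicalSpace D] [DiscreteTopology D]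
  [TopologicalSpace Z] [CompactSpace Z] [T2Space Z] (G : D → C(X, Z))

noncomputable def stoneCechExtendFamily (p : X × StoneCech D) : Z :=
  stoneCechExtend (continuous_of_discreteTopology (f := fun n => G n p.1)) p.2

theorem stoneCechExtendFamily_of_snd_eq {p : X × StoneCech D} {n : D}
    (hp : p.2 = stoneCechUnit n) : stoneCechExtendFamily G p = G n p.1 := by
  obtain ⟨x, t⟩ := p
  subst hp
  exact stoneCechExtend_stoneCechUnit _ n

theorem continuousAt_stoneCechExtendFamily_of_isOpen_singleton {x : X} (hx : IsOpen {x})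
    (t : StoneCech D) : ContinuousAt (stoneCechExtendFamily G) (x, t) := by
  have hK : Continuous fun p : X × StoneCech D => stoneCechExtendFamily G (x, p.2) :=
    (continuous_stoneCechExtend (continuous_of_discreteTopology (f := fun n => G n x))).comp
      continuous_snd
  refine hK.continuousAt.congr ?_
  filter_upwards [(hx.prod isOpen_univ).mem_nhds (mk_mem_prod rfl (mem_univ t))]
    with p hp
  rw [← mem_singleton_iff.mp hp.1]

theorem continuousAt_stoneCechExtendFamily_stoneCechUnit (x : X) (n : D) :
    ContinuousAt (stoneCechExtendFamily G) (x, stoneCechUnit n) := by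
  refine ((G n).continuous.comp continuous_fst).continuousAt.congr ?_
  filter_upwards [(isOpen_univ.prod (StoneCech.isOpen_singleton_stoneCechUnit n)).mem_nhds
    (mk_mem_prod (mem_univ x) rfl)] with p hp
  exact (stoneCechExtendFamily_of_snd_eq G hp.2).symm

theorem continuousOn_stoneCechExtendFamily :
    ContinuousOn (stoneCechExtendFamily G)
      {p | IsOpen {p.1} ∨ p.2 ∈ range (stoneCechUnit : D → StoneCech D)} := by
  rintro ⟨x, t⟩ (hx | ⟨n, rfl⟩)
  · exact (continuousAt_stoneCechExtendFamily_of_isOpen_singleton G hx t).continuousWithinAt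
  · exact (continuousAt_stoneCechExtendFamily_stoneCechUnit G x n).continuousWithinAt

end ExtendFamily

theorem isClosed_W1star : IsClosed W1star :=
  StoneCech.isOpen_range_stoneCechUnit.isClosed_compl

theorem isOpen_singleton_fst_or_snd_mem_range (p : V) :
    IsOpen {p.1.1} ∨ p.1.2 ∈ range (stoneCechUnit : ℕ → betaN) := by
  refine (not_and_or.mp p.2).imp ?_ not_not.mp
  intro hu
  obtain ⟨α, hα⟩ := not_not.mp hu
  exact hα ▸ StoneCech.isOpen_singleton_stoneCechUnit α

def rightSlice (n : ℕ) : C(W1star, Rside) where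
  toFun u := ⟨VmkR u n, u.2, n, rfl⟩
  continuous_toFun := by unfold VmkR; fun_prop

theorem rightSlice_eq {p : V} (hu : p.1.1 ∈ W1star) {n : ℕ} (hn : stoneCechUnit n = p.1.2) :
    rightSlice n ⟨p.1.1, hu⟩ = ⟨p, hu, n, hn⟩ := by
  ext
  · rfl
  · exact hn

/-- The right-hand side `R = ω₁* × ℕ` of the plank `V` is C*-embedded
in `V`. -/
theorem statement10 : CstarEmbedded Rside := by
  rintro f ⟨M, hM⟩
  have hf : ∀ a, f a ∈ Icc (-|M|) |M| := fun a => abs_le.mp ((hM a).trans (le_abs_self M))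
  have hslice : ∀ n : ℕ, ∃ G : C(betaW, ℝ),
      (∀ u, G u ∈ Icc (-|M|) |M|) ∧ G.restrict W1star = f.comp (rightSlice n) := fun n =>
    (f.comp (rightSlice n)).exists_restrict_eq_forall_mem_of_closed (fun _ => hf _)
      (nonempty_Icc.2 (neg_le_self (abs_nonneg M))) isClosed_W1star
  choose G hGM hGf using hslice
  let g : V → Icc (-|M|) |M| :=
    stoneCechExtendFamily (fun n => ⟨_, (G n).continuous.codRestrict (hGM n)⟩) ∘ Subtype.val
  have hg : Continuous g := (continuousOn_stoneCechExtendFamily _).comp_continuous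
    continuous_subtype_val isOpen_singleton_fst_or_snd_mem_range
  refine ⟨⟨fun p => g p, continuous_subtype_val.comp hg⟩, ?_⟩
  rintro ⟨p, hu, n, hn⟩
  calc (g p : ℝ) = G n p.1.1 :=
        congrArg Subtype.val (stoneCechExtendFamily_of_snd_eq _ hn.symm)
    _ = f (rightSlice n ⟨p.1.1, hu⟩) := congrArg (· ⟨p.1.1, hu⟩) (hGf n)
    _ = f ⟨p, hu, n, hn⟩ := by rw [rightSlice_eq hu hn]
end

section
/- The plank V is realcompact: there exist an index set ι and a closed embedding of V into ℝ^ι (with the product topology). -/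
open Set Topology

universe u

/-!
The plank is the complement of `ω₁* × ℕ*` in the compact space `βω₁ × βℕ`. A subspace of a
realcompact space cut out by conditions `D j x ≠ 0`, with every `D j` continuous, is realcompact:
`x ↦ (x, (1 / D j x)_j)` embeds it as a closed set. For `(q, r) ∈ ω₁* × ℕ*` take
`D (x, y) = g_q x + h_r y`, where `g_q ≥ 0` is positive on `ω₁` and vanishes at `q`. Such a `g_q`
exists because `q`, a free ultrafilter on `ω₁`, is not countably complete (Ulam), so some
`k : ω₁ → ℕ` tends to infinity along `q`, and `g_q` extends `1 / (k + 1)`; `h_r` is built alike.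
-/

open Filter

namespace Realcompact

variable {X Y : Type u} [TopologicalSpace X] [TopologicalSpace Y]

theorem of_isClosedEmbedding {f : X → Y} (hf : IsClosedEmbedding f) (hY : Realcompact Y) :
    Realcompact X :=
  let ⟨ι, g, hg⟩ := hY
  ⟨ι, g ∘ f, hg.comp hf⟩

theorem pi_real (ι : Type u) : Realcompact (ι → ℝ) :=
  ⟨ι, id, .id⟩

theorem prod (hX : Realcompact X) (hY : Realcompact Y) : Realcompact (X × Y) :=
  let ⟨ι, f, hf⟩ := hX
  let ⟨κ, g, hg⟩ := hY
  ⟨ι ⊕ κ, Homeomorph.sumArrowHomeomorphProdArrow.symm ∘ Prod.map f g,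
    Homeomorph.sumArrowHomeomorphProdArrow.symm.isClosedEmbedding.comp (hf.prodMap hg)⟩

theorem of_compactSpace [CompactSpace X] [T2Space X] : Realcompact X := by
  refine ⟨C(X, ℝ), fun x f => f x, (continuous_pi fun f => f.continuous).isClosedEmbedding ?_⟩
  intro x y hxy
  by_contra hne
  obtain ⟨f, hf, hfxy⟩ := separatesPoints_continuous_of_t35Space hne
  exact hfxy (congrFun hxy ⟨f, hf⟩)

theorem subtype_of_iff_forall_ne_zero (hX : Realcompact X) {J : Type u} {P : X → Prop}
    (D : J → X → ℝ) (hD : ∀ j, Continuous (D j)) (hP : ∀ x, P x ↔ ∀ j, D j x ≠ 0) :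
    Realcompact {x // P x} := by
  let F : {x // P x} → X × (J → ℝ) := fun x => (x.1, fun j => (D j x.1)⁻¹)
  have hF : Continuous F := continuous_subtype_val.prodMk <| continuous_pi fun j =>
    ((hD j).comp continuous_subtype_val).inv₀ fun x => (hP x.1).1 x.2 j
  have hrange : range F = {y | ∀ j, D j y.1 * y.2 j = 1} := by
    ext ⟨x, s⟩
    constructor
    · rintro ⟨x, hxs⟩ j
      rw [← hxs]
      exact mul_inv_cancel₀ ((hP x.1).1 x.2 j)
    · intro hs
      have hx : P x := (hP x).2 fun j => left_ne_zero_of_mul_eq_one (hs j)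
      exact ⟨⟨x, hx⟩, Prod.ext rfl (funext fun j => (eq_inv_of_mul_eq_one_right (hs j)).symm)⟩
  refine (hX.prod (pi_real J)).of_isClosedEmbedding (f := F)
    ⟨⟨.of_comp hF continuous_fst IsInducing.subtypeVal, fun x y h => Subtype.ext congr(($h).1)⟩, ?_⟩
  rw [hrange, ofPred_forall]
  exact isClosed_iInter fun j =>
    isClosed_eq (((hD j).comp continuous_fst).mul ((continuous_apply j).comp continuous_snd))
      continuous_const

end Realcompact

namespace Ultrafilter

variable {α : Type*}

theorem countable_iUnion_mem_iff {ι : Sort*} [Countable ι] {f : Ultrafilter α}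
    [CountableInterFilter (f : Filter α)] {s : ι → Set α} : ⋃ i, s i ∈ f ↔ ∃ i, s i ∈ f := by
  rw [← not_iff_not, ← compl_mem_iff_notMem, compl_iUnion, ← mem_coe, countable_iInter_mem]
  simp [compl_mem_iff_notMem]

theorem eq_pure_of_countable_mem {f : Ultrafilter α} [CountableInterFilter (f : Filter α)]
    {s : Set α} (hs : s.Countable) (hsf : s ∈ f) : ∃ x ∈ s, f = pure x := by
  have := hs.to_subtype
  rw [← iUnion_of_singleton_coe s, countable_iUnion_mem_iff] at hsf
  obtain ⟨⟨x, hx⟩, hxf⟩ := hsf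
  exact ⟨x, hx, eq_of_le (Filter.le_pure_iff.2 hxf)⟩

/-- Ulam's argument. Index the predecessors of each `b` injectively by `e b`. In a free countably
complete ultrafilter `f` every co-countable set such as `Ioi a` lies in `f`, so one of the pieces
`A a n = {b > a | e b a = n}` covering it lies in `f`, say for `n = n a`. Pieces `A a n` and
`A a' n` with `a ≠ a'` are disjoint, so `n` is injective and the order is countable. -/
theorem exists_eq_pure_of_countable_Iio [LinearOrder α] (hα : ∀ a : α, (Iio a).Countable)
    (f : Ultrafilter α) [CountableInterFilter (f : Filter α)] : ∃ a, f = pure a := by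
  by_contra! hfree
  have hcountable : ∀ s : Set α, s.Countable → s ∉ f := fun s hs hsf =>
    let ⟨x, _, hx⟩ := eq_pure_of_countable_mem hs hsf
    hfree x hx
  choose e he using fun b => @Countable.exists_injective_nat (Iio b) (hα b).to_subtype
  let A (a : α) (n : ℕ) : Set α := {b | ∃ h : a < b, e b ⟨a, h⟩ = n}
  have hA : ∀ a, ∃ n, A a n ∈ f := by
    intro a
    have hIoi : ⋃ n, A a n = Ioi a := by
      ext b
      simp only [A, mem_iUnion, mem_ofPred_eq, mem_Ioi]
      exact ⟨fun ⟨_, h, _⟩ => h, fun h => ⟨_, h, rfl⟩⟩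
    rw [← countable_iUnion_mem_iff, hIoi, ← compl_Iic, compl_mem_iff_notMem]
    refine hcountable _ ?_
    rw [← Iio_insert]
    exact (hα a).insert a
  choose n hn using hA
  have hinj : Function.Injective n := by
    intro a a' hnn
    obtain ⟨b, ⟨hab, hb⟩, ⟨hab', hb'⟩⟩ := nonempty_of_mem (inter_mem (hn a) (hn a'))
    exact congrArg Subtype.val (he b (hb.trans (hnn.trans hb'.symm)))
  have := hinj.countable
  exact hcountable univ countable_univ univ_mem

theorem exists_tendsto_atTop_of_not_countableInterFilter {f : Ultrafilter α}
    (hf : ¬ CountableInterFilter (f : Filter α)) : ∃ k : α → ℕ, Tendsto k f atTop := by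
  obtain ⟨A, hAf, hA⟩ : ∃ A : ℕ → Set α, (∀ n, A n ∈ f) ∧ ⋂ n, A n ∉ f := by
    by_contra! hA
    refine hf ⟨fun S hS hSf => ?_⟩
    rcases S.eq_empty_or_nonempty with rfl | hne
    · simp
    obtain ⟨A, rfl⟩ := hS.exists_eq_range hne
    rw [sInter_range]
    exact hA A fun n => hSf _ (mem_range_self n)
  classical
  let k (x : α) : ℕ := if hx : ∃ n, x ∉ A n then Nat.find hx else 0
  refine ⟨k, tendsto_atTop.2 fun N => ?_⟩
  have hfin : (⋂ n ∈ Iio N, A n) ∈ (f : Filter α) := (biInter_mem (finite_Iio N)).2 fun n _ => hAf n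
  filter_upwards [compl_mem_iff_notMem.2 hA, hfin] with x hx hxN
  have hx' : ∃ n, x ∉ A n := by simpa using hx
  simp only [k, dif_pos hx', Nat.le_find_iff, not_not]
  exact fun m hm => mem_iInter₂.1 hxN m hm

end Ultrafilter

namespace StoneCech

variable {X : Type*} [TopologicalSpace X] [DiscreteTopology X]

noncomputable def toUltrafilter : StoneCech X → Ultrafilter X :=
  stoneCechExtend (continuous_of_discreteTopology (f := (pure : X → Ultrafilter X)))

theorem continuous_toUltrafilter : Continuous (toUltrafilter : StoneCech X → Ultrafilter X) :=
  continuous_stoneCechExtend _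

@[simp]
theorem toUltrafilter_stoneCechUnit (a : X) : toUltrafilter (stoneCechUnit a) = pure a :=
  stoneCechExtend_stoneCechUnit _ a

theorem extend_stoneCechUnit_toUltrafilter (p : StoneCech X) :
    Ultrafilter.extend stoneCechUnit (toUltrafilter p) = p := by
  refine congrFun (stoneCech_hom_ext ((continuous_ultrafilter_extend _).comp
    continuous_toUltrafilter) continuous_id ?_) p
  ext a
  simp

theorem toUltrafilter_ne_pure {p : StoneCech X} (hp : p ∉ range stoneCechUnit) (a : X) :
    toUltrafilter p ≠ pure a := fun h =>
  hp ⟨a, by rw [← extend_stoneCechUnit_toUltrafilter p, h, ultrafilter_extend_pure]⟩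

theorem exists_continuous_zero_of_tendsto_atTop {k : X → ℕ} {p : StoneCech X}
    (hk : Tendsto k (toUltrafilter p) atTop) :
    ∃ g : StoneCech X → ℝ, Continuous g ∧ (∀ y, 0 ≤ g y) ∧ (∀ a, 0 < g (stoneCechUnit a)) ∧
      g p = 0 := by
  let φ (x : X) : unitInterval :=
    ⟨1 / (k x + 1), unitInterval.div_mem zero_le_one (by positivity) (by simp)⟩
  refine ⟨fun y => ((Ultrafilter.extend φ (toUltrafilter y) : unitInterval) : ℝ),
    continuous_subtype_val.comp ((continuous_ultrafilter_extend φ).comp continuous_toUltrafilter),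
    fun y => (Ultrafilter.extend φ (toUltrafilter y)).2.1, fun a => ?_, ?_⟩
  · simp only [toUltrafilter_stoneCechUnit, ultrafilter_extend_pure, φ]
    positivity
  · have hφ : Tendsto φ (toUltrafilter p) (𝓝 0) :=
      tendsto_subtype_rng.2 (tendsto_one_div_add_atTop_nhds_zero_nat.comp hk)
    simp only [ultrafilter_extend_eq_iff.2 hφ, Set.Icc.coe_zero]

theorem exists_continuous_zero_of_countable_Iio [LinearOrder X] (hX : ∀ a : X, (Iio a).Countable)
    {p : StoneCech X} (hp : p ∉ range stoneCechUnit) :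
    ∃ g : StoneCech X → ℝ, Continuous g ∧ (∀ y, 0 ≤ g y) ∧ (∀ a, 0 < g (stoneCechUnit a)) ∧
      g p = 0 := by
  have hnot : ¬ CountableInterFilter (toUltrafilter p : Filter X) := fun _ =>
    let ⟨a, ha⟩ := (toUltrafilter p).exists_eq_pure_of_countable_Iio hX
    toUltrafilter_ne_pure hp a ha
  obtain ⟨k, hk⟩ := Ultrafilter.exists_tendsto_atTop_of_not_countableInterFilter hnot
  exact exists_continuous_zero_of_tendsto_atTop hk

end StoneCech

noncomputable instance : LinearOrder W1 :=
  inferInstanceAs (LinearOrder (Cardinal.aleph 1).ord.ToType)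

theorem W1.countable_Iio (a : W1) : (Iio a).Countable :=
  Cardinal.le_aleph0_iff_set_countable.1
    (Cardinal.lt_aleph_one_iff.1 ((Cardinal.mk_Iio_lt (α := (Cardinal.aleph 1).ord.ToType) a
      (by simp)).trans_eq (by simp)))

/-- The plank `V` is realcompact. -/
theorem statement12 : Realcompact V := by
  choose gW hgW_cont hgW_nonneg hgW_pos hgW_zero using fun q : W1star =>
    StoneCech.exists_continuous_zero_of_countable_Iio W1.countable_Iio q.2
  choose gN hgN_cont hgN_nonneg hgN_pos hgN_zero using fun r : Nstar =>
    StoneCech.exists_continuous_zero_of_countable_Iio (fun n : ℕ => (finite_Iio n).countable) r.2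
  refine (Realcompact.of_compactSpace (X := betaW × betaN)).subtype_of_iff_forall_ne_zero
    (fun (j : W1star × Nstar) x => gW j.1 x.1 + gN j.2 x.2) (fun j => by fun_prop) fun x => ⟨?_, ?_⟩
  · rintro hx ⟨q, r⟩
    rcases not_and_or.1 hx with hq | hr
    · obtain ⟨a, ha⟩ := not_not.1 hq
      rw [← ha]
      exact (add_pos_of_pos_of_nonneg (hgW_pos q a) (hgN_nonneg r _)).ne'
    · obtain ⟨n, hn⟩ := not_not.1 hr
      rw [← hn]
      exact (add_pos_of_nonneg_of_pos (hgW_nonneg q _) (hgN_pos r n)).ne'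
  · rintro hx ⟨hq, hr⟩
    exact hx (⟨_, hq⟩, ⟨_, hr⟩) (by simp only [hgW_zero, hgN_zero, add_zero])
end

section
/- The right-hand side R = {∞} × D of the plank 𝔸 is C*-embedded in 𝔸: every bounded continuous function f : R → ℝ extends to a continuous function 𝔸 → ℝ. -/
open Set Topology

/-- `D = 2^{<ω}`, the set of finite binary sequences; as a space it is discrete
(the topology on `List Bool` is discrete since `Bool` is discrete). -/
abbrev D : Type := List Bool

/-- The Stone–Čech compactification `βD` of the discrete space `D`. -/
abbrev betaD : Type := StoneCech D

/-- The wedge `U(x, n) ∩ D`: all finite binary sequences extending `x ↾ n`. -/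
def wedge (x : ℕ → Bool) (n : ℕ) : Set D :=
  {s : D | (List.ofFn fun i : Fin n => x i) <+: s}

/-- `K x = e⁻¹(x)`, where `e : βD → cD` is the continuous extension of the identity of `D` to
the compactification `cD = D ∪ 2^ω`: the set of points of `βD` lying in the closure of every
wedge `U(x, n) ∩ D`. -/
def K (x : ℕ → Bool) : Set betaD :=
  ⋂ n : ℕ, closure (stoneCechUnit '' wedge x n)

/-- `Λ = 2^ω ∪ {∞}`. -/
def Lam : Type := Option (ℕ → Bool)

/-- The point `x ∈ 2^ω` of `Λ`. -/
def Lam.mk (x : ℕ → Bool) : Lam := Option.some x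

/-- The point `∞` of `Λ`. -/
def Lam.infty : Lam := Option.none

/-- The topology on `Λ`: every point of `2^ω` is isolated, and the neighbourhoods of `∞` are
exactly the sets containing `∞` whose complement in `2^ω` is countable. -/
instance : TopologicalSpace Lam where
  IsOpen U := Lam.infty ∈ U → {x : ℕ → Bool | Lam.mk x ∉ U}.Countable
  isOpen_univ := fun _ => by simp
  isOpen_inter := by
    intro U V hU hV h
    refine ((hU h.1).union (hV h.2)).mono fun x hx => ?_
    by_cases hxU : Lam.mk x ∈ U
    · exact Or.inr fun hxV => hx ⟨hxU, hxV⟩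
    · exact Or.inl hxU
  isOpen_sUnion := by
    intro S hS h
    obtain ⟨U, hUS, hU⟩ := h
    exact (hS U hUS hU).mono fun x hx hxU => hx ⟨U, hUS, hxU⟩

/-- The plank `𝔸`: the subspace `(Λ × D) ∪ ⋃_{x ∈ 2^ω} ({x} × K x)` of `Λ × βD`. -/
abbrev Aplank : Type :=
  {p : Lam × betaD //
    (∃ s : D, p.2 = stoneCechUnit s) ∨ (∃ x : ℕ → Bool, p.1 = Lam.mk x ∧ p.2 ∈ K x)}

/-- The point `(∞, s)` of the right-hand side `R = {∞} × D` of `𝔸`. -/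
def AmkR (s : D) : Aplank := ⟨(Lam.infty, stoneCechUnit s), Or.inl ⟨s, rfl⟩⟩

/-! The projection `𝔸 → βD` is the identity on `R ≅ D`, so a bounded function on `R`
extends to `βD` by the universal property of the Stone–Čech compactification and then
pulls back to `𝔸`. -/

theorem exists_stoneCech_extension_of_bounded {α : Type*} [TopologicalSpace α] (f : C(α, ℝ))
    (hf : ∃ M : ℝ, ∀ a, |f a| ≤ M) :
    ∃ g : C(StoneCech α, ℝ), ∀ a, g (stoneCechUnit a) = f a := by
  obtain ⟨M, hM⟩ := hf
  let f' : α → Icc (-M) M := fun a => ⟨f a, abs_le.mp (hM a)⟩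
  have hf' : Continuous f' := f.continuous.subtype_mk _
  refine ⟨⟨fun p => (stoneCechExtend hf' p : Icc (-M) M), ?_⟩, fun a => ?_⟩
  · exact continuous_subtype_val.comp (continuous_stoneCechExtend hf')
  · exact congrArg Subtype.val (congrFun (stoneCechExtend_extends hf') a)

theorem cstarEmbedded_range_of_stoneCech_s14 {α X : Type*} [TopologicalSpace α] [TopologicalSpace X]
    {i : α → X} (hi : Continuous i) {π : X → StoneCech α} (hπ : Continuous π)
    (hπi : ∀ a, π (i a) = stoneCechUnit a) : CstarEmbedded (range i) := by
  rintro f ⟨M, hM⟩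
  obtain ⟨g, hg⟩ := exists_stoneCech_extension_of_bounded
    (f.comp ⟨rangeFactorization i, hi.rangeFactorization⟩) ⟨M, fun a => hM _⟩
  refine ⟨g.comp ⟨π, hπ⟩, ?_⟩
  rintro ⟨_, a, rfl⟩
  simp [hπi, hg, rangeFactorization]

/-- The right-hand side `R = {∞} × D` of the plank `𝔸` is C*-embedded
in `𝔸`. -/
theorem statement14 : CstarEmbedded (Set.range AmkR) :=
  cstarEmbedded_range_of_stoneCech_s14 continuous_of_discreteTopology
    (π := fun a : Aplank => a.1.2) (by fun_prop) fun _ => rfl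
end

section
/- The right-hand side R = {∞} × D of the plank 𝔸 is not C-embedded in 𝔸: the continuous function R → ℝ defined by (∞, s) ↦ |s| (the length of the finite binary sequence s) has no continuous extension to 𝔸. -/
/-!
For each `s`, the slice `l ↦ g(l, s)` of a continuous `g : 𝔸 → ℝ` is within `1` of `g(∞, s) = |s|`
on a co-countable set of `l`, so some `x ∈ 2^ω` lies in all of these countably many sets:
`g(x, s) > |s| - 1` for every `s`. But at a point `(x, p)` with `p ∈ K x`, every neighbourhood
contains points `(x, s)` with `s` in arbitrarily deep wedges at `x`, hence with `|s|` arbitrarily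
large, contradicting continuity of `g` at `(x, p)`. Since `R` is discrete, `(∞, s) ↦ |s|` is
continuous on it, so `R` is not C-embedded.
-/

open Set Topology

open Filter

instance : Uncountable (ℕ → Bool) := by
  rw [← Cardinal.aleph0_lt_mk_iff]
  simpa using Cardinal.cantor Cardinal.aleph0

theorem not_cEmbedded_range_of_isEmbedding {ι X : Type*} [TopologicalSpace ι]
    [TopologicalSpace X] {e : ι → X} (he : IsEmbedding e) {h : ι → ℝ} (hh : Continuous h)
    (hext : ¬ ∃ g : C(X, ℝ), ∀ i, g (e i) = h i) : ¬ CEmbedded (range e) := by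
  intro hC
  let φ := he.toHomeomorph
  obtain ⟨g, hg⟩ := hC ⟨h ∘ φ.symm, hh.comp φ.symm.continuous⟩
  refine hext ⟨g, fun i => ?_⟩
  simpa [φ] using hg (φ i)

theorem Lam.exists_mk_mem_of_countable {ι : Type*} [Countable ι] {V : ι → Set Lam}
    (hV : ∀ i, V i ∈ 𝓝 Lam.infty) : ∃ x, ∀ i, Lam.mk x ∈ V i := by
  have hcount : ∀ i, {x | Lam.mk x ∉ V i}.Countable := fun i => by
    obtain ⟨U, hUV, hU, hmem⟩ := mem_nhds_iff.mp (hV i)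
    exact (hU hmem).mono fun x hx hxU => hx (hUV hxU)
  obtain ⟨x, hx⟩ : ∃ x, x ∉ ⋃ i, {x | Lam.mk x ∉ V i} := by
    by_contra! h
    exact not_countable_univ ((countable_iUnion hcount).mono fun x _ => h x)
  exact ⟨x, fun i => not_not.mp fun hi => hx (mem_iUnion.mpr ⟨i, hi⟩)⟩

theorem wedge_succ_subset (x : ℕ → Bool) (n : ℕ) : wedge x (n + 1) ⊆ wedge x n := by
  have h : (List.ofFn fun i : Fin n => x i) <+: (List.ofFn fun i : Fin (n + 1) => x i) := by
    rw [List.ofFn_succ']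
    exact List.prefix_concat _ _
  exact fun s hs => h.trans hs

theorem le_length_of_mem_wedge {x : ℕ → Bool} {n : ℕ} {s : D} (hs : s ∈ wedge x n) :
    n ≤ s.length := by
  simpa using hs.length_le

theorem K_nonempty (x : ℕ → Bool) : (K x).Nonempty := by
  refine IsCompact.nonempty_iInter_of_sequence_nonempty_isCompact_isClosed _
    (fun n => closure_mono (image_mono (wedge_succ_subset x n)))
    (fun n => ⟨_, subset_closure (mem_image_of_mem _ (List.prefix_refl _))⟩)
    isClosed_closure.isCompact (fun _ => isClosed_closure)

def AmkD (l : Lam) (s : D) : Aplank := ⟨(l, stoneCechUnit s), Or.inl ⟨s, rfl⟩⟩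

theorem continuous_AmkD_left (s : D) : Continuous (AmkD · s) :=
  (continuous_id.prodMk continuous_const).subtype_mk _

theorem isEmbedding_AmkR : IsEmbedding AmkR :=
  IsEmbedding.of_comp continuous_of_discreteTopology
    (continuous_snd.comp continuous_subtype_val) isEmbedding_stoneCechUnit

theorem tendsto_AmkD_mk {x : ℕ → Bool} {p : betaD} (hp : p ∈ K x) :
    Tendsto (AmkD (Lam.mk x)) (comap stoneCechUnit (𝓝 p))
      (𝓝 ⟨(Lam.mk x, p), Or.inr ⟨x, rfl, hp⟩⟩) :=
  tendsto_subtype_rng.mpr (tendsto_const_nhds.prodMk_nhds tendsto_comap)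

theorem not_exists_extension_length :
    ¬ ∃ g : C(Aplank, ℝ), ∀ s : D, g (AmkR s) = (s.length : ℝ) := by
  rintro ⟨g, hg⟩
  obtain ⟨x, hx⟩ : ∃ x, ∀ s : D, (s.length : ℝ) - 1 < g (AmkD (Lam.mk x) s) :=
    Lam.exists_mk_mem_of_countable fun s =>
      (g.continuous.comp (continuous_AmkD_left s)).continuousAt.preimage_mem_nhds
        (Ioi_mem_nhds (by change _ < g (AmkR s); simp [hg]))
  obtain ⟨p, hp⟩ := K_nonempty x
  obtain ⟨n, hn⟩ := exists_nat_gt (g ⟨(Lam.mk x, p), Or.inr ⟨x, rfl, hp⟩⟩ + 1)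
  have hne : (comap stoneCechUnit (𝓝 p) ⊓ 𝓟 (wedge x n)).NeBot := by
    have hpn := mem_iInter.mp hp n
    rw [mem_closure_iff_clusterPt, ClusterPt, ← map_principal] at hpn
    exact neBot_inf_comap_iff_map'.mpr hpn
  have hlim := ((g.continuous.tendsto _).comp (tendsto_AmkD_mk hp)).mono_left
    (inf_le_left (b := 𝓟 (wedge x n)))
  have hbound : ∀ s ∈ wedge x n, (n : ℝ) - 1 ≤ g (AmkD (Lam.mk x) s) := fun s hs =>
    (sub_le_sub_right (Nat.cast_le.mpr (le_length_of_mem_wedge hs)) 1).trans (hx s).le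
  have hle := ge_of_tendsto hlim (mem_inf_of_right (mem_principal.mpr hbound))
  linarith

/-- The right-hand side `R = {∞} × D` of the plank `𝔸` is not C-embedded in
`𝔸`: the continuous function `(∞, s) ↦ |s|` on `R` has no continuous extension to `𝔸`. -/
theorem statement15 :
    ¬ CEmbedded (Set.range AmkR) ∧
    ¬ ∃ g : C(Aplank, ℝ), ∀ s : D, g (AmkR s) = (s.length : ℝ) :=
  ⟨not_cEmbedded_range_of_isEmbedding isEmbedding_AmkR continuous_of_discreteTopology
    not_exists_extension_length, not_exists_extension_length⟩
end

section
/- The plank 𝔸 is realcompact: there exist an index set ι and a closed embedding of 𝔸 into ℝ^ι (with the product topology). -/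
open Set Topology

universe u

/-!
A zero-dimensional T₀ space `X` embeds into `ℝ^ι` through the indicator functions of its clopen
sets together with, for every sequence `(Cₙ)` of clopen sets with empty intersection, the
`ℕ`-valued function `a ↦ min {n | a ∉ Cₙ}`. A point `φ` in the closure of the image defines the
clopen ultrafilter `{C | φ_C = 1}`, which has the countable intersection property because the
coordinate of `φ` at such a sequence is a finite real number. If that ultrafilter is fixed at `a`,
then `φ` is the image of `a`. So `X` is realcompact as soon as every clopen ultrafilter with the
countable intersection property is fixed.

For the plank, project such an ultrafilter to `Λ` and to `βD`. On `βD` it is fixed by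
compactness, at `q` say; on `Λ` it is fixed at some `p` because a closed subset of `Λ` missing `∞`
is countable and discrete. If `q ∉ D`, the branches of the wedges containing `q` determine a
`y ∈ 2^ω` with `q ∈ K y`; were `p ≠ y`, the countably many sets `{y}ᶜ × βD` and
`Λ × cl U(y, n)` of the ultrafilter would have a common point, which would lie in `K y` but
off `{y} × K y`. Hence `(p, q)` is a point of the plank, and the ultrafilter is fixed there.
-/

open TopologicalSpace

section ClopenUltrafilter

variable {X Y Z : Type*} [TopologicalSpace X] [TopologicalSpace Y] [TopologicalSpace Z]

structure IsCountableInterClopenUltrafilter (F : Set (Set X)) : Prop where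
  isClopen_of_mem : ∀ ⦃C⦄, C ∈ F → IsClopen C
  mem_or_compl_mem : ∀ ⦃C⦄, IsClopen C → C ∈ F ∨ Cᶜ ∈ F
  sInter_nonempty : ∀ ⦃S⦄, S ⊆ F → S.Countable → (⋂₀ S).Nonempty

def mapClopen (f : X → Y) (F : Set (Set X)) : Set (Set Y) :=
  {T | IsClopen T ∧ f ⁻¹' T ∈ F}

namespace IsCountableInterClopenUltrafilter

variable {F : Set (Set X)} (hF : IsCountableInterClopenUltrafilter F)
include hF

lemma inter_nonempty {C C' : Set X} (hC : C ∈ F) (hC' : C' ∈ F) : (C ∩ C').Nonempty := by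
  simpa using hF.sInter_nonempty (S := {C, C'}) (by simp [insert_subset_iff, hC, hC'])
    (by simp)

lemma inter_mem {C C' : Set X} (hC : C ∈ F) (hC' : C' ∈ F) : C ∩ C' ∈ F := by
  have hCC' := (hF.isClopen_of_mem hC).inter (hF.isClopen_of_mem hC')
  refine (hF.mem_or_compl_mem hCC').resolve_right fun h => ?_
  obtain ⟨a, ha⟩ := hF.sInter_nonempty (S := {C, C', (C ∩ C')ᶜ})
    (by simp [insert_subset_iff, hC, hC', h]) (by simp)
  simp only [sInter_insert, sInter_singleton, mem_inter_iff, mem_compl_iff] at ha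
  exact ha.2.2 ⟨ha.1, ha.2.1⟩

lemma mem_of_mem_sInter {a : X} {C : Set X} (ha : a ∈ ⋂₀ F) (hC : IsClopen C) (haC : a ∈ C) :
    C ∈ F :=
  (hF.mem_or_compl_mem hC).resolve_right fun h => ha _ h haC

lemma mem_sInter_of_isTopologicalBasis {B : Set (Set X)} (hB : IsTopologicalBasis B) {a : X}
    (h : ∀ s ∈ B, a ∈ s → s ∈ F) : a ∈ ⋂₀ F := by
  intro C hC
  by_contra ha
  obtain ⟨s, hsB, has, hsC⟩ :=
    hB.exists_subset_of_mem_open ha (hF.isClopen_of_mem hC).isClosed.isOpen_compl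
  obtain ⟨b, hbs, hbC⟩ := hF.inter_nonempty (h s hsB has) hC
  exact hsC hbs hbC

lemma map {f : X → Y} (hf : Continuous f) : IsCountableInterClopenUltrafilter (mapClopen f F) where
  isClopen_of_mem _ hT := hT.1
  mem_or_compl_mem T hT := (hF.mem_or_compl_mem (hT.preimage hf)).imp (⟨hT, ·⟩) (⟨hT.compl, ·⟩)
  sInter_nonempty S hS hcount := by
    obtain ⟨a, ha⟩ := hF.sInter_nonempty (S := preimage f '' S)
      (image_subset_iff.2 fun T hT => (hS hT).2) (hcount.image _)
    exact ⟨f a, fun T hT => ha _ ⟨T, hT, rfl⟩⟩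

lemma sInter_nonempty_of_countable_mem {T : Set X} (hT : T ∈ F) (hcount : T.Countable)
    (hiso : ∀ a ∈ T, IsClopen {a}) : (⋂₀ F).Nonempty := by
  by_cases h : ∃ a ∈ T, {a} ∈ F
  · obtain ⟨a, -, ha⟩ := h
    refine ⟨a, fun C hC => ?_⟩
    obtain ⟨b, hba, hbC⟩ := hF.inter_nonempty ha hC
    rwa [mem_singleton_iff.1 hba] at hbC
  · push Not at h
    -- otherwise `T` and the sets `{a}ᶜ` with `a ∈ T` are countably many members of `F`
    -- with empty intersection
    obtain ⟨b, hb⟩ := hF.sInter_nonempty (S := insert T ((fun a => {a}ᶜ) '' T))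
      (insert_subset hT (image_subset_iff.2 fun a ha =>
        (hF.mem_or_compl_mem (hiso a ha)).resolve_left (h a ha)))
      ((hcount.image _).insert T)
    simp only [sInter_insert, sInter_image, mem_inter_iff, mem_iInter, mem_compl_iff,
      mem_singleton_iff] at hb
    exact (hb.2 b hb.1 rfl).elim

lemma sInter_nonempty_of_compactSpace [CompactSpace X] : (⋂₀ F).Nonempty := by
  by_contra h
  rw [not_nonempty_iff_eq_empty, sInter_eq_iInter] at h
  obtain ⟨u, hu⟩ := isCompact_univ.elim_finite_subfamily_closed (fun C : F => (C : Set X))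
    (fun C => (hF.isClopen_of_mem C.2).isClosed) (by rwa [univ_inter])
  obtain ⟨a, ha⟩ := hF.sInter_nonempty (S := Subtype.val '' (u : Set F))
    (by rintro _ ⟨C, -, rfl⟩; exact C.2) (u.countable_toSet.image _)
  rw [sInter_image] at ha
  exact hu.subset ⟨mem_univ a, ha⟩

end IsCountableInterClopenUltrafilter

lemma isTopologicalBasis_preimage_val_clopen_prod (hY : IsTopologicalBasis {s : Set Y | IsClopen s})
    (hZ : IsTopologicalBasis {s : Set Z | IsClopen s}) (P : Y × Z → Prop) :
    IsTopologicalBasis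
      (preimage (Subtype.val : Subtype P → Y × Z) ''
        image2 (· ×ˢ ·) {s | IsClopen s} {s | IsClopen s}) :=
  (hY.prod hZ).isInducing IsInducing.subtypeVal

lemma isTopologicalBasis_isClopen_subtype_prod (hY : IsTopologicalBasis {s : Set Y | IsClopen s})
    (hZ : IsTopologicalBasis {s : Set Z | IsClopen s}) (P : Y × Z → Prop) :
    IsTopologicalBasis {s : Set (Subtype P) | IsClopen s} :=
  (isTopologicalBasis_preimage_val_clopen_prod hY hZ P).of_isOpen_of_subset
    (fun _ h => h.isOpen) <| by
    rintro _ ⟨_, ⟨T, hT, B, hB, rfl⟩, rfl⟩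
    exact (hT.prod hB).preimage continuous_subtype_val

lemma IsCountableInterClopenUltrafilter.mem_sInter_of_fst_snd
    (hY : IsTopologicalBasis {s : Set Y | IsClopen s})
    (hZ : IsTopologicalBasis {s : Set Z | IsClopen s}) {P : Y × Z → Prop}
    {F : Set (Set (Subtype P))} (hF : IsCountableInterClopenUltrafilter F)
    {a : Subtype P} (h₁ : a.1.1 ∈ ⋂₀ mapClopen (fun b : Subtype P => b.1.1) F)
    (h₂ : a.1.2 ∈ ⋂₀ mapClopen (fun b : Subtype P => b.1.2) F) : a ∈ ⋂₀ F := by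
  refine hF.mem_sInter_of_isTopologicalBasis
    (isTopologicalBasis_preimage_val_clopen_prod hY hZ P) ?_
  rintro _ ⟨_, ⟨T, hT, B, hB, rfl⟩, rfl⟩ ⟨haT, haB⟩
  exact hF.inter_mem ((hF.map (by fun_prop)).mem_of_mem_sInter h₁ hT haT).2
    ((hF.map (by fun_prop)).mem_of_mem_sInter h₂ hB haB).2

end ClopenUltrafilter

section Coordinates

variable {X : Type*} [TopologicalSpace X]

variable (X) in
def NullSeq : Type _ := {g : ℕ → Clopens X // ⋂ n, (g n : Set X) = ∅}

namespace NullSeq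

variable (g : NullSeq X)

lemma exists_notMem (a : X) : ∃ n, a ∉ g.1 n := by
  by_contra! h
  simpa [g.2] using mem_iInter.2 h

open Classical in
noncomputable def depth (a : X) : ℕ := Nat.find (g.exists_notMem a)

lemma le_depth_iff {n : ℕ} {a : X} : n ≤ g.depth a ↔ ∀ m < n, a ∈ g.1 m := by
  simp [depth, Nat.le_find_iff]

lemma isClopen_setOf_le_depth (n : ℕ) : IsClopen {a | n ≤ g.depth a} := by
  have : {a | n ≤ g.depth a} = ⋂ m ∈ Finset.range n, (g.1 m : Set X) := by
    ext a
    simp [le_depth_iff]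
  rw [this]
  exact isClopen_biInter_finset fun m _ => (g.1 m).isClopen

lemma continuous_depth : Continuous g.depth := by
  refine continuous_discrete_rng.2 fun k => ?_
  have : g.depth ⁻¹' {k} = {a | k ≤ g.depth a} \ {a | k + 1 ≤ g.depth a} := by
    ext a
    simp only [mem_preimage, mem_singleton_iff, mem_sdiff, mem_ofPred_eq]
    omega
  rw [this]
  exact ((g.isClopen_setOf_le_depth k).diff (g.isClopen_setOf_le_depth (k + 1))).isOpen

def clopenPreimage (s : Set ℕ) : Clopens X :=
  ⟨g.depth ⁻¹' s, (isClopen_discrete s).preimage g.continuous_depth⟩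

end NullSeq

noncomputable def clopenCoords (a : X) : Clopens X ⊕ NullSeq X → ℝ
  | .inl C => (C : Set X).indicator 1 a
  | .inr g => g.depth a

lemma continuous_clopenCoords : Continuous (clopenCoords (X := X)) :=
  continuous_pi fun
    | .inl C => C.isClopen.continuous_indicator continuous_const
    | .inr g => (continuous_of_discreteTopology (f := ((↑) : ℕ → ℝ))).comp g.continuous_depth

lemma isInducing_clopenCoords (hB : IsTopologicalBasis {s : Set X | IsClopen s}) :
    IsInducing (clopenCoords (X := X)) := by
  refine ⟨le_antisymm (continuous_iff_le_induced.1 continuous_clopenCoords)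
    ((le_generateFrom fun C (hC : IsClopen C) => ?_).trans_eq hB.eq_generateFrom.symm)⟩
  refine isOpen_induced_iff.2 ⟨(fun ψ => ψ (.inl ⟨C, hC⟩)) ⁻¹' {0}ᶜ,
    isOpen_compl_singleton.preimage (continuous_apply _), ?_⟩
  ext a
  simp [clopenCoords]

section ClosureOfRange

variable {φ : Clopens X ⊕ NullSeq X → ℝ} (hφ : φ ∈ closure (range clopenCoords))
include hφ

lemma eq_of_mem_closure_range {f g : (Clopens X ⊕ NullSeq X → ℝ) → ℝ} (hf : Continuous f)
    (hg : Continuous g) (h : ∀ a, f (clopenCoords a) = g (clopenCoords a)) : f φ = g φ :=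
  EqOn.closure (by rintro _ ⟨a, rfl⟩; exact h a) hf hg hφ

lemma apply_top_of_mem_closure : φ (.inl ⊤) = 1 :=
  eq_of_mem_closure_range hφ (f := fun ψ => ψ (.inl ⊤)) (continuous_apply _) continuous_const
    fun a => by simp [clopenCoords]

lemma apply_inf_of_mem_closure (C C' : Clopens X) :
    φ (.inl (C ⊓ C')) = φ (.inl C) * φ (.inl C') :=
  eq_of_mem_closure_range hφ (f := fun ψ => ψ (.inl (C ⊓ C'))) (continuous_apply _)
    ((continuous_apply _).mul (continuous_apply _))
    fun a => by by_cases a ∈ C <;> by_cases a ∈ C' <;> simp [clopenCoords, *]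

lemma apply_compl_of_mem_closure (C : Clopens X) : φ (.inl Cᶜ) = 1 - φ (.inl C) :=
  eq_of_mem_closure_range hφ (f := fun ψ => ψ (.inl Cᶜ)) (continuous_apply _)
    (continuous_const.sub (continuous_apply _))
    fun a => by simp [clopenCoords, indicator_compl]

lemma apply_eq_zero_or_one_of_mem_closure (C : Clopens X) : φ (.inl C) = 0 ∨ φ (.inl C) = 1 := by
  have h := apply_inf_of_mem_closure hφ C C
  rw [inf_idem] at h
  rcases mul_eq_zero.1 (show φ (.inl C) * (φ (.inl C) - 1) = 0 by linarith) with h | h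
  exacts [.inl h, .inr (by linarith)]

lemma natCast_mul_le_apply_of_mem_closure (g : NullSeq X) (n : ℕ) :
    n * φ (.inl (g.clopenPreimage (Ici n))) ≤ φ (.inr g) := by
  refine closure_minimal (s := range clopenCoords) ?_
    (isClosed_le (continuous_const.mul (continuous_apply _)) (continuous_apply _)) hφ
  rintro _ ⟨a, rfl⟩
  by_cases ha : n ≤ g.depth a <;> simp [clopenCoords, NullSeq.clopenPreimage, ha]

lemma apply_mul_sub_eq_zero_of_mem_closure (g : NullSeq X) (n : ℕ) :
    φ (.inl (g.clopenPreimage {n})) * (φ (.inr g) - n) = 0 :=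
  eq_of_mem_closure_range hφ (g := fun _ => 0)
    ((continuous_apply _).mul ((continuous_apply _).sub continuous_const)) continuous_const
    fun a => by
      by_cases ha : g.depth a = n <;> simp [clopenCoords, NullSeq.clopenPreimage, ha]

def ultrafilterOfCoords (φ : Clopens X ⊕ NullSeq X → ℝ) : Set (Set X) :=
  {C | ∃ h : IsClopen C, φ (.inl ⟨C, h⟩) = 1}

lemma isCountableInterClopenUltrafilter_of_mem_closure :
    IsCountableInterClopenUltrafilter (ultrafilterOfCoords φ) where
  isClopen_of_mem _ hC := hC.1
  mem_or_compl_mem C hC := by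
    refine (apply_eq_zero_or_one_of_mem_closure hφ ⟨C, hC⟩).symm.imp (⟨hC, ·⟩) fun h =>
      ⟨hC.compl, (apply_compl_of_mem_closure hφ ⟨C, hC⟩).trans (by simp [h])⟩
  sInter_nonempty S hS hcount := by
    have huniv : univ ∈ ultrafilterOfCoords φ := ⟨isClopen_univ, apply_top_of_mem_closure hφ⟩
    obtain ⟨C, hC⟩ := (hcount.insert univ).exists_eq_range (insert_nonempty _ _)
    have hCF : ∀ n, C n ∈ ultrafilterOfCoords φ := fun n =>
      insert_subset huniv hS (hC ▸ mem_range_self n)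
    rw [← univ_inter (⋂₀ S), ← sInter_insert, hC, sInter_range, nonempty_iff_ne_empty]
    intro hempty
    let g : NullSeq X := ⟨fun n => ⟨C n, (hCF n).1⟩, hempty⟩
    have hg : ∀ n, φ (.inl (g.clopenPreimage (Ici n))) = 1 := by
      intro n
      induction n with
      | zero =>
        convert apply_top_of_mem_closure hφ
        ext a
        simp [NullSeq.clopenPreimage]
      | succ n ih =>
        have : g.clopenPreimage (Ici (n + 1)) = g.clopenPreimage (Ici n) ⊓ g.1 n := by
          ext a
          simp only [NullSeq.clopenPreimage, Clopens.coe_mk, Clopens.coe_inf, mem_preimage, mem_Ici,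
            mem_inter_iff, NullSeq.le_depth_iff, Nat.forall_lt_succ_right]
          rfl
        rw [this, apply_inf_of_mem_closure hφ, ih, one_mul]
        exact (hCF n).2
    obtain ⟨n, hn⟩ := exists_nat_gt (φ (.inr g))
    have := natCast_mul_le_apply_of_mem_closure hφ g n
    rw [hg, mul_one] at this
    linarith

lemma clopenCoords_eq_of_mem_closure {a : X} (ha : a ∈ ⋂₀ ultrafilterOfCoords φ) :
    clopenCoords a = φ := by
  have hinl : ∀ C : Clopens X, φ (.inl C) = (C : Set X).indicator 1 a := by
    intro C
    rcases apply_eq_zero_or_one_of_mem_closure hφ C with h | h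
    · have hCc : (C : Set X)ᶜ ∈ ultrafilterOfCoords φ :=
        ⟨C.isClopen.compl, (apply_compl_of_mem_closure hφ C).trans (by simp [h])⟩
      have haC : a ∉ (C : Set X) := ha _ hCc
      simp [h, haC]
    · simp [h, ha C ⟨C.isClopen, h⟩]
  funext i
  rcases i with C | g
  · exact (hinl C).symm
  · have h := apply_mul_sub_eq_zero_of_mem_closure hφ g (g.depth a)
    have ha : a ∈ (g.clopenPreimage {g.depth a} : Set X) := rfl
    rw [hinl, indicator_of_mem ha, Pi.one_apply, one_mul, sub_eq_zero] at h
    exact h.symm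

end ClosureOfRange

theorem realcompact_of_forall_sInter_nonempty [T0Space X]
    (hB : IsTopologicalBasis {s : Set X | IsClopen s})
    (hfix : ∀ F : Set (Set X), IsCountableInterClopenUltrafilter F → (⋂₀ F).Nonempty) :
    Realcompact X := by
  have hind := isInducing_clopenCoords hB
  refine ⟨_, clopenCoords, ⟨hind, hind.injective⟩, closure_subset_iff_isClosed.1 fun φ hφ => ?_⟩
  obtain ⟨a, ha⟩ := hfix _ (isCountableInterClopenUltrafilter_of_mem_closure hφ)
  exact ⟨a, clopenCoords_eq_of_mem_closure hφ ha⟩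

end Coordinates

section StoneCech

variable {α : Type*} [TopologicalSpace α] [DiscreteTopology α]

lemma closure_image_stoneCechUnit (A : Set α) :
    closure (stoneCechUnit '' A) =
      stoneCechExtend (continuous_of_discreteTopology (f := A.boolIndicator)) ⁻¹' {true} := by
  set e := stoneCechExtend (continuous_of_discreteTopology (f := A.boolIndicator))
  have he : IsClopen (e ⁻¹' {true}) :=
    (isClopen_discrete _).preimage (continuous_stoneCechExtend _)
  refine subset_antisymm (closure_minimal ?_ he.isClosed) fun q hq => ?_
  · rintro _ ⟨a, ha, rfl⟩
    simpa [e, stoneCechExtend_stoneCechUnit] using (A.mem_iff_boolIndicator a).1 ha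
  · refine closure_mono ?_ (he.isOpen.inter_closure
      ⟨hq, (denseRange_stoneCechUnit (α := α)).closure_range ▸ mem_univ q⟩)
    rintro _ ⟨ha, a, rfl⟩
    refine ⟨a, (A.mem_iff_boolIndicator a).2 ?_, rfl⟩
    simpa [e, stoneCechExtend_stoneCechUnit] using ha

lemma isClopen_closure_image_stoneCechUnit (A : Set α) :
    IsClopen (closure (stoneCechUnit '' A)) := by
  rw [closure_image_stoneCechUnit]
  exact (isClopen_discrete _).preimage (continuous_stoneCechExtend _)

lemma stoneCechUnit_mem_closure_image_iff {A : Set α} {a : α} :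
    stoneCechUnit a ∈ closure (stoneCechUnit '' A) ↔ a ∈ A := by
  simp [closure_image_stoneCechUnit, stoneCechExtend_stoneCechUnit, A.mem_iff_boolIndicator]

lemma StoneCech.isTopologicalBasis_isClopen :
    IsTopologicalBasis {s : Set (StoneCech α) | IsClopen s} :=
  have : ExtremallyDisconnected (StoneCech α) := StoneCech.projective.extremallyDisconnected
  _root_.isTopologicalBasis_isClopen

end StoneCech

section Wedges

def bits (s : D) (n : ℕ) : Bool := s.getD n false

lemma mem_wedge_iff {x : ℕ → Bool} {n : ℕ} {s : D} :
    s ∈ wedge x n ↔ n ≤ s.length ∧ ∀ i < n, bits s i = x i := by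
  simp only [wedge, mem_ofPred_eq, List.prefix_iff_getElem, List.length_ofFn, List.getElem_ofFn,
    bits]
  constructor
  · rintro ⟨hn, h⟩
    exact ⟨hn, fun i hi => by rw [List.getD_eq_getElem _ _ (by omega), ← h i hi]⟩
  · rintro ⟨hn, h⟩
    exact ⟨hn, fun i hi => by rw [← h i hi, List.getD_eq_getElem _ _ (by omega)]⟩

/-- The map `e : βD → cD` of the paper, followed by the retraction of `cD` onto `2^ω` that
pads every finite sequence with `false`s. -/
noncomputable def branch : betaD → ℕ → Bool :=
  stoneCechExtend (continuous_of_discreteTopology (f := bits))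

lemma continuous_branch : Continuous branch := continuous_stoneCechExtend _

lemma branch_stoneCechUnit (s : D) : branch (stoneCechUnit s) = bits s :=
  stoneCechExtend_stoneCechUnit _ s

lemma branch_eq_of_mem_K {x : ℕ → Bool} {q : betaD} (hq : q ∈ K x) : branch q = x := by
  funext i
  have hclosed : IsClosed {z : ℕ → Bool | z i = x i} :=
    isClosed_eq (continuous_apply i) continuous_const
  refine closure_minimal ?_ hclosed
    (image_closure_subset_closure_image continuous_branch ⟨q, mem_iInter.1 hq (i + 1), rfl⟩)
  rintro _ ⟨_, ⟨s, hs, rfl⟩, rfl⟩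
  exact (branch_stoneCechUnit s).symm ▸ (mem_wedge_iff.1 hs).2 i (Nat.lt_succ_self i)

lemma stoneCechUnit_notMem_K (s : D) (x : ℕ → Bool) : stoneCechUnit s ∉ K x := fun h =>
  (Nat.not_succ_le_self _) (mem_wedge_iff.1 (stoneCechUnit_mem_closure_image_iff.1
    (mem_iInter.1 h (s.length + 1)))).1

lemma mem_K_branch {q : betaD} (hq : q ∉ range stoneCechUnit) : q ∈ K (branch q) := by
  refine mem_iInter.2 fun n => ?_
  set L : Set D := {s | n ≤ s.length}
  have hLc : closure (stoneCechUnit '' Lᶜ) = stoneCechUnit '' Lᶜ := by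
    refine (Set.Finite.image _ ?_).isClosed.closure_eq
    convert List.finite_length_lt Bool n using 1
    ext
    simp [L]
  have hqL : q ∈ closure (stoneCechUnit '' L) := by
    have := (denseRange_stoneCechUnit (α := D)).closure_range ▸ mem_univ q
    rw [← image_univ, ← union_compl_self L, image_union, closure_union, hLc] at this
    exact this.resolve_right fun ⟨s, _, hs⟩ => hq ⟨s, hs⟩
  set O : Set betaD := branch ⁻¹' (Iio n).pi fun i => {branch q i}
  have hO : IsOpen O :=
    (isOpen_set_pi (finite_Iio n) fun _ _ => isOpen_discrete _).preimage continuous_branch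
  refine closure_mono ?_ (hO.inter_closure ⟨fun i _ => rfl, hqL⟩)
  rintro _ ⟨hO', s, hs, rfl⟩
  refine ⟨s, mem_wedge_iff.2 ⟨hs, fun i hi => ?_⟩, rfl⟩
  simpa [O, branch_stoneCechUnit] using hO' i hi

end Wedges

section Lam

instance : T1Space Lam where
  t1 l := by
    refine ⟨fun hl => ?_⟩
    cases l with
    | none => exact absurd rfl hl
    | some x => exact (countable_singleton x).mono fun y hy =>
        mem_singleton_iff.2 (Option.some.inj (mem_singleton_iff.1 (not_not.1 hy)))

lemma Lam.isOpen_of_infty_notMem {U : Set Lam} (h : Lam.infty ∉ U) : IsOpen U :=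
  fun h' => absurd h' h

lemma Lam.isClopen_singleton_mk (x : ℕ → Bool) : IsClopen {Lam.mk x} :=
  ⟨isClosed_singleton,
    Lam.isOpen_of_infty_notMem fun h => Option.some_ne_none x (mem_singleton_iff.1 h).symm⟩

lemma Lam.countable_of_isClosed {T : Set Lam} (hT : IsClosed T) (h : Lam.infty ∉ T) :
    T.Countable := by
  refine ((hT.isOpen_compl h).image Lam.mk).mono fun l hl => ?_
  cases l with
  | none => exact absurd hl h
  | some x => exact ⟨x, not_not.2 hl, rfl⟩

lemma Lam.isTopologicalBasis_isClopen : IsTopologicalBasis {s : Set Lam | IsClopen s} := by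
  refine isTopologicalBasis_of_isOpen_of_nhds (fun _ h => h.isOpen) fun l U hl hU => ?_
  cases l with
  | none => exact ⟨U, ⟨⟨Lam.isOpen_of_infty_notMem fun h => h hl⟩, hU⟩, hl, subset_rfl⟩
  | some x => exact ⟨{Lam.mk x}, Lam.isClopen_singleton_mk x, rfl, singleton_subset_iff.2 hl⟩

lemma Lam.sInter_nonempty {G : Set (Set Lam)} (hG : IsCountableInterClopenUltrafilter G) :
    (⋂₀ G).Nonempty := by
  by_cases h : Lam.infty ∈ ⋂₀ G
  · exact ⟨_, h⟩
  obtain ⟨T, hT, hinf⟩ : ∃ T ∈ G, Lam.infty ∉ T := by simpa [mem_sInter] using h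
  refine hG.sInter_nonempty_of_countable_mem hT
    (Lam.countable_of_isClosed (hG.isClopen_of_mem hT).isClosed hinf) fun l hl => ?_
  cases l with
  | none => exact absurd hl hinf
  | some x => exact Lam.isClopen_singleton_mk x

end Lam

namespace Aplank

lemma isTopologicalBasis_isClopen : IsTopologicalBasis {s : Set Aplank | IsClopen s} :=
  isTopologicalBasis_isClopen_subtype_prod Lam.isTopologicalBasis_isClopen
    StoneCech.isTopologicalBasis_isClopen _

variable {F : Set (Set Aplank)} (hF : IsCountableInterClopenUltrafilter F)
include hF

lemma mem_plank_of_mem_sInter_mapClopen {p : Lam} {q : betaD}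
    (hp : p ∈ ⋂₀ mapClopen (fun b : Aplank => b.1.1) F)
    (hq : q ∈ ⋂₀ mapClopen (fun b : Aplank => b.1.2) F) :
    (∃ s : D, q = stoneCechUnit s) ∨ ∃ x : ℕ → Bool, p = Lam.mk x ∧ q ∈ K x := by
  by_cases hqD : ∃ s : D, q = stoneCechUnit s
  · exact .inl hqD
  set y := branch q
  have hqK : q ∈ K y := mem_K_branch fun ⟨s, hs⟩ => hqD ⟨s, hs.symm⟩
  by_cases hpy : p = Lam.mk y
  · exact .inr ⟨y, hpy, hqK⟩
  exfalso
  have hfst : (fun b : Aplank => b.1.1) ⁻¹' {Lam.mk y}ᶜ ∈ F :=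
    ((hF.map (by fun_prop)).mem_of_mem_sInter hp (Lam.isClopen_singleton_mk y).compl hpy).2
  have hsnd : ∀ n, (fun b : Aplank => b.1.2) ⁻¹' closure (stoneCechUnit '' wedge y n) ∈ F :=
    fun n => ((hF.map (by fun_prop)).mem_of_mem_sInter hq
      (isClopen_closure_image_stoneCechUnit _) (mem_iInter.1 hqK n)).2
  obtain ⟨a, ha⟩ := hF.sInter_nonempty (insert_subset hfst (range_subset_iff.2 hsnd))
    ((countable_range _).insert _)
  simp only [sInter_insert, sInter_range, mem_inter_iff, mem_preimage, mem_iInter] at ha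
  have haK : a.1.2 ∈ K y := mem_iInter.2 ha.2
  rcases a.2 with ⟨s, hs⟩ | ⟨x, hx, hxK⟩
  · exact absurd (hs ▸ haK) (stoneCechUnit_notMem_K s y)
  · exact ha.1 (by rw [hx, ← branch_eq_of_mem_K hxK, branch_eq_of_mem_K haK]; rfl)

lemma sInter_nonempty : (⋂₀ F).Nonempty := by
  obtain ⟨p, hp⟩ := Lam.sInter_nonempty (hF.map (f := fun b : Aplank => b.1.1) (by fun_prop))
  obtain ⟨q, hq⟩ :=
    (hF.map (f := fun b : Aplank => b.1.2) (by fun_prop)).sInter_nonempty_of_compactSpace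
  exact ⟨⟨(p, q), mem_plank_of_mem_sInter_mapClopen hF hp hq⟩, hF.mem_sInter_of_fst_snd
    Lam.isTopologicalBasis_isClopen StoneCech.isTopologicalBasis_isClopen hp hq⟩

end Aplank

/-- The plank `𝔸` is realcompact. -/
theorem statement16 : Realcompact Aplank :=
  realcompact_of_forall_sInter_nonempty Aplank.isTopologicalBasis_isClopen
    fun _ hF => Aplank.sInter_nonempty hF
end

section
/- The set C(𝔸, ℝ) of all continuous real-valued functions on the plank 𝔸 has cardinality exactly 𝔠 = 2^{ℵ₀}, the cardinality of the continuum. -/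
open Set Topology

/-! A continuous real function on `Λ` is constant off a countable set, because `∞` has
only co-countable neighbourhoods and `ℝ` is first countable. Such a function is coded by an
enumeration of that countable set (together with `∞`) and the values there, so
`#C(Λ, ℝ) ≤ 𝔠`. Since `Λ × D` is dense in `𝔸`, a continuous function on `𝔸` is determined by
its countably many rows `Λ × {s}`, whence `#C(𝔸, ℝ) ≤ 𝔠 ^ ℵ₀ = 𝔠`. Constant functions give
the reverse inequality. -/

open Filter Cardinal

theorem Filter.Tendsto.preimage_ker_mem {α β : Type*} {l : Filter α} [CountableInterFilter l]
    {l' : Filter β} [l'.IsCountablyGenerated] {g : α → β} (h : Tendsto g l l') :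
    g ⁻¹' l'.ker ∈ l := by
  obtain ⟨t, ht⟩ := l'.exists_antitone_basis
  simp only [ht.ker, iInter_true, preimage_iInter]
  exact countable_iInter_mem.2 fun n => h (ht.mem n)

theorem Cardinal.mk_le_of_countable_setOf_ne {X Y : Type*} (x₀ : X) (S : Set (X → Y))
    (hS : ∀ g ∈ S, {x | g x ≠ g x₀}.Countable) : #S ≤ #(ℕ → X × Y) := by
  have hT (g : S) : (insert x₀ {x | g.1 x ≠ g.1 x₀}).Countable := (hS g g.2).insert x₀
  choose e he using fun g : S => (hT g).exists_eq_range ⟨x₀, mem_insert x₀ _⟩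
  refine mk_le_of_injective (f := fun g n => (e g n, g.1 (e g n))) fun g h hgh => ?_
  have hgh' := fun n => Prod.ext_iff.1 (congrFun hgh n)
  have hee : e g = e h := funext fun n => (hgh' n).1
  have hval : ∀ x ∈ range (e g), g.1 x = h.1 x := by
    rintro _ ⟨n, rfl⟩
    exact (hgh' n).2.trans (congrArg h.1 (hgh' n).1).symm
  have hx₀ : x₀ ∈ range (e g) := (he g).symm ▸ mem_insert x₀ _
  refine Subtype.ext (funext fun x => ?_)
  by_cases hx : x ∈ range (e g)
  · exact hval x hx
  · have hxg : g.1 x = g.1 x₀ := by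
      by_contra hne
      exact hx ((he g).symm ▸ mem_insert_of_mem x₀ hne)
    have hxh : h.1 x = h.1 x₀ := by
      by_contra hne
      exact hx (hee ▸ (he h).symm ▸ mem_insert_of_mem x₀ hne)
    rw [hxg, hxh, hval x₀ hx₀]

theorem Cardinal.mk_arrow_le_continuum {ι α : Type*} [Countable ι] (h : #α ≤ 𝔠) :
    #(ι → α) ≤ 𝔠 := by
  rw [mk_arrow, ← continuum_power_aleph0]
  exact (power_le_power_right (lift_le_continuum.2 h)).trans
    (power_le_power_left continuum_ne_zero (lift_le_aleph0.2 mk_le_aleph0))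

theorem ContinuousMap.const_injective {X Y : Type*} [TopologicalSpace X] [TopologicalSpace Y]
    [Nonempty X] : Function.Injective (ContinuousMap.const X : Y → C(X, Y)) :=
  fun _ _ h => Function.const_injective (congrArg DFunLike.coe h)

namespace Lam

theorem cocountable_le_nhds_infty : cocountable ≤ 𝓝 Lam.infty := by
  intro U hU
  obtain ⟨V, hVU, hV, hVinf⟩ := mem_nhds_iff.1 hU
  refine mem_cocountable.2 (((hV hVinf).image Option.some).mono fun a ha => ?_)
  cases a with
  | none => exact absurd (hVU hVinf) ha
  | some x => exact ⟨x, fun hx => ha (hVU hx), rfl⟩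

theorem countable_setOf_ne_infty {Y : Type*} [TopologicalSpace Y] [T1Space Y]
    [FirstCountableTopology Y] {g : Lam → Y} (hg : Continuous g) :
    {a | g a ≠ g Lam.infty}.Countable := by
  have := CardinalInterFilter.toCountableInterFilter (cocountable (α := Lam)) aleph0_lt_aleph_one
  have h := ((hg.tendsto Lam.infty).mono_left cocountable_le_nhds_infty).preimage_ker_mem
  rwa [ker_nhds, mem_cocountable] at h

theorem mk_eq_continuum : #Lam = 𝔠 := by
  change #(Option (ℕ → Bool)) = 𝔠
  rw [mk_option, mk_arrow, lift_id, lift_id, mk_bool, mk_nat, ← continuum,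
    add_one_eq aleph0_le_continuum]

theorem mk_continuousMap_le {Y : Type*} [TopologicalSpace Y] [T1Space Y]
    [FirstCountableTopology Y] (hY : #Y ≤ 𝔠) : #C(Lam, Y) ≤ 𝔠 := by
  let S : Set (Lam → Y) := {g | {a | g a ≠ g Lam.infty}.Countable}
  have hS : #C(Lam, Y) ≤ #S :=
    mk_le_of_injective (f := fun g => ⟨g, countable_setOf_ne_infty g.continuous⟩)
      fun g h hgh => ContinuousMap.coe_injective (congrArg Subtype.val hgh)
  refine hS.trans ((mk_le_of_countable_setOf_ne Lam.infty S fun g hg => hg).trans ?_)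
  refine mk_arrow_le_continuum ?_
  rw [mk_prod, lift_uzero, mk_eq_continuum, lift_continuum]
  calc 𝔠 * #Y ≤ 𝔠 * 𝔠 := by gcongr
    _ = 𝔠 := mul_eq_self aleph0_le_continuum

end Lam

namespace Aplank

def row (s : D) : C(Lam, Aplank) :=
  ⟨fun a => ⟨(a, stoneCechUnit s), Or.inl ⟨s, rfl⟩⟩,
    (continuous_id.prodMk continuous_const).subtype_mk _⟩

theorem denseRange_row : DenseRange fun p : Lam × D => row p.2 p.1 := by
  refine IsInducing.subtypeVal.dense_iff.2 fun q => ?_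
  rw [← range_comp]
  exact (denseRange_id.prodMap denseRange_stoneCechUnit) q.1

theorem injective_comp_row : Function.Injective fun (f : C(Aplank, ℝ)) (s : D) => f.comp (row s) :=
  fun f g hfg => ContinuousMap.ext <| congrFun <|
    denseRange_row.equalizer f.continuous g.continuous <| funext fun p =>
      DFunLike.congr_fun (congrFun hfg p.2) p.1

end Aplank

/-- The set `C(𝔸, ℝ)` of continuous real-valued functions on the plank `𝔸`
has cardinality exactly `𝔠 = 2^{ℵ₀}`. -/
theorem statement17 : Cardinal.mk C(Aplank, ℝ) = Cardinal.continuum := by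
  refine le_antisymm ?_ ?_
  · calc #C(Aplank, ℝ) ≤ #(D → C(Lam, ℝ)) := mk_le_of_injective Aplank.injective_comp_row
      _ ≤ 𝔠 := mk_arrow_le_continuum (Lam.mk_continuousMap_le mk_real.le)
  · have : Nonempty Aplank := ⟨AmkR []⟩
    exact mk_real ▸ mk_le_of_injective ContinuousMap.const_injective
end

section
/- Let ι be an index set of cardinality 𝔠 = 2^{ℵ₀}. There exists a subset N of ℝ^ι (the product of ι copies of ℝ with the product topology) such that N is a closed copy of ℕ in ℝ^ι, N is C*-embedded in ℝ^ι, but N is not C-embedded in ℝ^ι. -/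
/-!
Index the coordinates of `ℝ^ι` by a family of `𝔠` functions `ℚ → ℝ` and let `N` be the image
of `ℚ` under evaluation `q ↦ (f q)_f`. If the family contains every bounded function, `N` is
discrete and C*-embedded: a bounded function on `N` is a coordinate projection. If it also
contains `|q|` and every `|q - z|⁻¹`, then `N` is closed: along a free ultrafilter on `ℚ` either
`|q|` diverges or `q → z` for some real `z`, and then `|q - z|⁻¹` diverges.

On the other hand `ℝ^ι` is separable, so a continuous `g` on it depends on countably many
coordinates. All of them stay bounded near an irrational `y` avoiding the countably many `z`
involved, so `g` converges along an ultrafilter of rationals tending to `y` and cannot extend an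
injection `N → ℕ`.
-/

open Set Topology

open Filter Function TopologicalSpace

section ProductSpace

variable {ι : Type*} {X : ι → Type*} [∀ i, TopologicalSpace (X i)]

lemma exists_finset_forall_eq_imp_mem {x : ∀ i, X i} {U : Set (∀ i, X i)} (hU : U ∈ 𝓝 x) :
    ∃ I : Finset ι, ∀ y, (∀ i ∈ I, y i = x i) → y ∈ U := by
  rw [nhds_pi, mem_pi'] at hU
  obtain ⟨I, t, ht, hsub⟩ := hU
  exact ⟨I, fun y hy => hsub fun i hi => (hy i hi).symm ▸ mem_of_mem_nhds (ht i)⟩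

lemma tendsto_finset_piecewise_atTop [DecidableEq ι] (x y : ∀ i, X i) :
    Tendsto (fun I : Finset ι => I.piecewise x y) atTop (𝓝 x) := by
  refine tendsto_pi_nhds.2 fun i => tendsto_const_nhds.congr' ?_
  filter_upwards [eventually_ge_atTop {i}] with I hI
  exact (Finset.piecewise_eq_of_mem _ _ _ (hI (Finset.mem_singleton_self i))).symm

lemma separableSpace_pi_real_of_injective {c : ι → ℝ} (hc : Injective c) :
    SeparableSpace (ι → ℝ) := by
  classical
  refine DenseRange.separableSpace (f := fun (p : C(ℝ, ℝ)) i => p (c i)) (fun x => ?_)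
    (continuous_pi fun i => continuous_eval_const (c i))
  refine mem_closure_iff_nhds.2 fun U hU => ?_
  obtain ⟨I, hI⟩ := exists_finset_forall_eq_imp_mem hU
  exact ⟨_, hI _ fun i hi => Lagrange.eval_interpolate_at_node x hc.injOn hi,
    mem_range_self (Lagrange.interpolate I c x).toContinuousMap⟩

variable {Y : Type*} {g : (∀ i, X i) → Y}

lemma Continuous.dependsOn_of_forall_update [DecidableEq ι] [TopologicalSpace Y] [T2Space Y]
    (hg : Continuous g) {S : Set ι} (h : ∀ i ∉ S, ∀ x (a : X i), g (Function.update x i a) = g x) :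
    DependsOn g S := by
  intro x y hxy
  have hpiece : ∀ I : Finset ι, g (I.piecewise x y) = g y := by
    intro I
    induction I using Finset.induction_on with
    | empty => rw [Finset.piecewise_empty]
    | insert i I hi ih =>
      rw [Finset.piecewise_insert]
      by_cases hiS : i ∈ S
      · rw [hxy i hiS, update_eq_self_iff.2 (Finset.piecewise_eq_of_notMem _ _ _ hi).symm, ih]
      · rw [h i hiS, ih]
  refine tendsto_nhds_unique ((hg.tendsto x).comp (tendsto_finset_piecewise_atTop x y)) ?_
  simp only [comp_def, hpiece, tendsto_const_nhds]

variable [MetricSpace Y]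

lemma Continuous.finite_setOf_lt_dist_update [DecidableEq ι] (hg : Continuous g) (d : ∀ i, X i)
    {ε : ℝ} (hε : 0 < ε) :
    {i | ∃ a b : X i, ε < dist (g (Function.update d i a)) (g (Function.update d i b))}.Finite := by
  obtain ⟨I, hI⟩ := exists_finset_forall_eq_imp_mem
    (hg.continuousAt.preimage_mem_nhds (Metric.ball_mem_nhds (g d) (half_pos hε)))
  refine I.finite_toSet.subset fun i ⟨a, b, hab⟩ => ?_
  by_contra hi
  have hclose : ∀ c : X i, dist (g (Function.update d i c)) (g d) < ε / 2 := fun c =>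
    hI _ fun j hj => update_of_ne (ne_of_mem_of_not_mem hj hi) _ _
  linarith [dist_triangle_right (g (Function.update d i a)) (g (Function.update d i b)) (g d),
    hclose a, hclose b]

lemma Continuous.exists_lt_dist_update_of_dense [DecidableEq ι] (hg : Continuous g)
    {D : Set (∀ i, X i)} (hD : Dense D) {x : ∀ i, X i} {i : ι} {a : X i}
    (h : g (Function.update x i a) ≠ g x) :
    ∃ d ∈ D, dist (g (Function.update x i a)) (g x) / 3 <
      dist (g (Function.update d i a)) (g (Function.update d i (x i))) := by
  set δ := dist (g (Function.update x i a)) (g x)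
  have hδ : 0 < δ / 3 := by have := dist_pos.2 h; positivity
  have hnhds : ∀ c : X i, (fun z => g (Function.update z i c)) ⁻¹'
      Metric.ball (g (Function.update x i c)) (δ / 3) ∈ 𝓝 x := fun c =>
    (hg.comp (continuous_id.update i continuous_const)).continuousAt.preimage_mem_nhds
      (Metric.ball_mem_nhds _ hδ)
  obtain ⟨d, ⟨hda, hdx⟩, hdD⟩ :=
    mem_closure_iff_nhds.1 (hD x) _ (inter_mem (hnhds a) (hnhds (x i)))
  rw [mem_preimage, Metric.mem_ball] at hda hdx
  rw [update_eq_self] at hdx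
  refine ⟨d, hdD, ?_⟩
  linarith [dist_triangle4 (g (Function.update x i a)) (g (Function.update d i a))
    (g (Function.update d i (x i))) (g x),
    dist_comm (g (Function.update x i a)) (g (Function.update d i a))]

theorem Continuous.exists_countable_dependsOn [SeparableSpace (∀ i, X i)] (hg : Continuous g) :
    ∃ S : Set ι, S.Countable ∧ DependsOn g S := by
  classical
  obtain ⟨D, hDc, hD⟩ := exists_countable_dense (∀ i, X i)
  refine ⟨{i | ∃ (x : ∀ j, X j) (a : X i), g (Function.update x i a) ≠ g x}, ?_,
    hg.dependsOn_of_forall_update fun i hi x a => not_not.1 fun h => hi ⟨x, a, h⟩⟩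
  refine (hDc.biUnion fun d _ => countable_iUnion fun m : ℕ =>
    (hg.finite_setOf_lt_dist_update d (Nat.one_div_pos_of_nat (n := m))).countable).mono ?_
  rintro i ⟨x, a, hxa⟩
  obtain ⟨d, hdD, hd⟩ := hg.exists_lt_dist_update_of_dense hD hxa
  obtain ⟨m, hm⟩ := exists_nat_one_div_lt (div_pos (dist_pos.2 hxa) three_pos)
  exact mem_biUnion hdD (mem_iUnion.2 ⟨m, a, x i, hm.trans hd⟩)

end ProductSpace

section EvaluationMap

variable {Q ι : Type*} {σ : ι → Q → ℝ}

lemma isClosed_range_of_forall_ultrafilter {X : Type*} [TopologicalSpace X] [T1Space X]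
    {e : Q → X}
    (h : ∀ V : Ultrafilter Q, (V : Filter Q) ≤ cofinite → ∀ p, ¬ Tendsto e V (𝓝 p)) :
    IsClosed (range e) := by
  refine closure_subset_iff_isClosed.1 fun p hp => ?_
  rw [mem_closure_iff_clusterPt, ← map_top, ← MapClusterPt, mapClusterPt_iff_ultrafilter] at hp
  obtain ⟨V, -, hV⟩ := hp
  rcases V.le_cofinite_or_eq_pure with hfree | ⟨q, rfl⟩
  · exact absurd hV (h V hfree p)
  · exact ⟨q, pure_le_nhds_iff.1 hV⟩

lemma Continuous.exists_tendsto_comp_of_dependsOn {α Y : Type*} [TopologicalSpace Y]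
    {g : (ι → ℝ) → Y} (hg : Continuous g) {S : Set ι} (hgS : DependsOn g S) {l : Filter α}
    {x : α → ι → ℝ} (hx : ∀ i ∈ S, ∃ L, Tendsto (fun a => x a i) l (𝓝 L)) :
    ∃ L, Tendsto (g ∘ x) l (𝓝 L) := by
  choose! L hL using hx
  have hxS : Tendsto (fun a => S.indicator (x a)) l (𝓝 (S.indicator L)) := by
    refine tendsto_pi_nhds.2 fun i => ?_
    by_cases hi : i ∈ S
    · simpa only [indicator_of_mem hi] using hL i hi
    · simpa only [indicator_of_notMem hi] using tendsto_const_nhds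
  refine ⟨_, ((hg.tendsto _).comp hxS).congr fun a => hgS fun i hi => ?_⟩
  exact indicator_of_mem hi _

variable (hb : ∀ f : Q → ℝ, (∃ M, ∀ q, |f q| ≤ M) → f ∈ range σ)
include hb

lemma exists_apply_eq_one_and_eq_zero (q : Q) :
    ∃ i, σ i q = 1 ∧ ∀ q' ≠ q, σ i q' = 0 := by
  classical
  obtain ⟨i, hi⟩ := hb (Pi.single q 1) ⟨1, fun q' => by
    rcases eq_or_ne q' q with rfl | h <;> simp [*]⟩
  exact ⟨i, by simp [hi], fun q' hq' => by simp [hi, hq']⟩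

lemma injective_swap : Injective (swap σ) := by
  intro q q' h
  obtain ⟨i, hq, hq'⟩ := exists_apply_eq_one_and_eq_zero hb q
  by_contra hne
  have : σ i q = σ i q' := congrFun h i
  rw [hq, hq' q' (Ne.symm hne)] at this
  exact one_ne_zero this

lemma discreteTopology_range_swap : DiscreteTopology (range (swap σ)) := by
  refine discreteTopology_iff_isOpen_singleton.2 ?_
  rintro ⟨_, q, rfl⟩
  obtain ⟨i, hq, hq'⟩ := exists_apply_eq_one_and_eq_zero hb q
  have hopen : IsOpen {y : ι → ℝ | y i ≠ 0} :=
    isOpen_ne_fun (continuous_apply i) continuous_const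
  convert hopen.preimage continuous_subtype_val
  ext ⟨_, q', rfl⟩
  rcases eq_or_ne q' q with rfl | hne
  · simp [swap, hq]
  · simp [swap, hq' q' hne, Subtype.ext_iff, (injective_swap hb).ne hne]

lemma cstarEmbedded_range_swap : CstarEmbedded (range (swap σ)) := by
  rintro f ⟨M, hM⟩
  obtain ⟨i, hi⟩ := hb (fun q => f ⟨swap σ q, q, rfl⟩) ⟨M, fun q => hM _⟩
  exact ⟨⟨fun y => y i, continuous_apply i⟩, by rintro ⟨_, q, rfl⟩; exact congrFun hi q⟩

lemma not_cEmbedded_range_swap [Countable Q] [SeparableSpace (ι → ℝ)]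
    (hconv : ∀ S : Set ι, S.Countable →
      ∃ V : Ultrafilter Q, (V : Filter Q) ≤ cofinite ∧ ∀ i ∈ S, ∃ L, Tendsto (σ i) V (𝓝 L)) :
    ¬ CEmbedded (range (swap σ)) := by
  intro hC
  have := discreteTopology_range_swap hb
  obtain ⟨n, hn⟩ := Countable.exists_injective_nat Q
  set e := Equiv.ofInjective _ (injective_swap hb)
  obtain ⟨g, hg⟩ := hC ⟨fun p => (n (e.symm p) : ℝ), continuous_of_discreteTopology⟩
  have hgn : g ∘ swap σ = fun q => (n q : ℝ) := funext fun q =>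
    (hg ⟨_, q, rfl⟩).trans (by simp [e, Equiv.ofInjective_symm_apply])
  obtain ⟨S, hS, hgS⟩ := g.continuous.exists_countable_dependsOn
  obtain ⟨V, hV, hlim⟩ := hconv S hS
  obtain ⟨L, hL⟩ := g.continuous.exists_tendsto_comp_of_dependsOn hgS hlim
  have hn_atTop : Tendsto (fun q => (n q : ℝ)) V atTop :=
    tendsto_natCast_atTop_atTop.comp ((Nat.cofinite_eq_atTop ▸ hn.tendsto_cofinite).mono_left hV)
  exact not_tendsto_nhds_of_tendsto_atTop hn_atTop L (hgn ▸ hL)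

end EvaluationMap

section RatFamily

lemma Ultrafilter.exists_tendsto_of_abs_le {α : Type*} (V : Ultrafilter α) {f : α → ℝ} {M : ℝ}
    (hM : ∀ a, |f a| ≤ M) : ∃ L, Tendsto f V (𝓝 L) := by
  obtain ⟨L, -, hL⟩ := isCompact_Icc.ultrafilter_le_nhds (V.map f)
    (le_principal_iff.2 (Ultrafilter.mem_map.2 (univ_mem' fun a => abs_le.1 (hM a))))
  exact ⟨L, hL⟩

lemma injective_inv_abs_sub_ratCast : Injective fun (z : ℝ) (q : ℚ) => |(q : ℝ) - z|⁻¹ := by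
  intro z z' h
  have h' : (fun t : ℝ => |t - z|) = fun t => |t - z'| :=
    Rat.denseRange_cast.equalizer (by fun_prop) (by fun_prop)
      (funext fun q => inv_inj.1 (congrFun h q))
  simpa [sub_eq_zero, eq_comm] using congrFun h' z

/-- At `q = z` the coordinate `|q - z|⁻¹` takes the junk value `0⁻¹ = 0`; any value would do. -/
def ratFamily : Set (ℚ → ℝ) :=
  {f | ∃ M, ∀ q, |f q| ≤ M} ∪ range (fun (z : ℝ) (q : ℚ) => |(q : ℝ) - z|⁻¹) ∪
    {fun q : ℚ => |(q : ℝ)|}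

lemma exists_range_eq_ratFamily {ι : Type*} (hι : Cardinal.continuum ≤ Cardinal.mk ι) :
    ∃ σ : ι → ℚ → ℝ, range σ = ratFamily := by
  obtain ⟨e⟩ : Nonempty (ratFamily ↪ ι) := by
    rw [← Cardinal.lift_mk_le', Cardinal.lift_uzero]
    refine (Cardinal.lift_le.2 (Cardinal.mk_set_le _)).trans ?_
    simpa [Cardinal.mk_real] using hι
  have : Nonempty ratFamily := ⟨⟨_, Or.inr rfl⟩⟩
  refine ⟨Subtype.val ∘ invFun e, ?_⟩
  rw [range_comp, (invFun_surjective e.injective).range_eq, image_univ, Subtype.range_coe]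

lemma exists_not_tendsto_of_le_cofinite (V : Ultrafilter ℚ) (hV : (V : Filter ℚ) ≤ cofinite) :
    ∃ f ∈ ratFamily, ∀ L, ¬ Tendsto f V (𝓝 L) := by
  by_cases habs : ∃ L, Tendsto (fun q : ℚ => |(q : ℝ)|) V (𝓝 L)
  swap
  · push Not at habs
    exact ⟨_, Or.inr rfl, habs⟩
  obtain ⟨L, hL⟩ := habs
  have hIcc : ∀ᶠ q : ℚ in V, (q : ℝ) ∈ Icc (-(L + 1)) (L + 1) := by
    filter_upwards [hL.eventually (gt_mem_nhds (lt_add_one L))] with q hq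
    exact abs_le.1 hq.le
  obtain ⟨z, -, hz⟩ :=
    isCompact_Icc.ultrafilter_le_nhds (V.map ((↑) : ℚ → ℝ)) (le_principal_iff.2 hIcc)
  have hne : ∀ᶠ q : ℚ in V, (q : ℝ) ≠ z := hV <| mem_cofinite.2 <| Subsingleton.finite
    fun a ha b hb => Rat.cast_injective ((not_not.1 ha).trans (not_not.1 hb).symm)
  refine ⟨_, Or.inl (Or.inr ⟨z, rfl⟩), fun L => not_tendsto_nhds_of_tendsto_atTop ?_ L⟩
  refine Tendsto.inv_tendsto_nhdsGT_zero (f := fun q : ℚ => |(q : ℝ) - z|) ?_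
  refine tendsto_nhdsWithin_iff.2 ⟨?_, hne.mono fun q hq => abs_pos.2 (sub_ne_zero.2 hq)⟩
  simpa [comp_def] using ((continuous_sub_right z).abs.tendsto z).comp hz

lemma exists_ultrafilter_forall_tendsto {S : Set (ℚ → ℝ)} (hS : S.Countable)
    (hSF : S ⊆ ratFamily) :
    ∃ V : Ultrafilter ℚ, (V : Filter ℚ) ≤ cofinite ∧ ∀ f ∈ S, ∃ L, Tendsto f V (𝓝 L) := by
  have hZ : {z : ℝ | (fun q : ℚ => |(q : ℝ) - z|⁻¹) ∈ S}.Countable :=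
    hS.preimage injective_inv_abs_sub_ratCast
  obtain ⟨y, hy⟩ := ((hZ.union (countable_range ((↑) : ℚ → ℝ))).dense_compl ℝ).nonempty
  rw [mem_compl_iff, mem_union, not_or] at hy
  obtain ⟨hyZ, hyQ⟩ := hy
  have := Rat.isDenseEmbedding_coe_real.comap_nhds_neBot y
  set V := Ultrafilter.of (comap ((↑) : ℚ → ℝ) (𝓝 y))
  have hVy : Tendsto ((↑) : ℚ → ℝ) V (𝓝 y) := tendsto_comap.mono_left (Ultrafilter.of_le _)
  refine ⟨V, fun s hs => ?_, fun f hf => ?_⟩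
  · have : ((↑) '' sᶜ : Set ℝ)ᶜ ∈ 𝓝 y := (hs.image _).isClosed.isOpen_compl.mem_nhds
      (by rintro ⟨q, -, rfl⟩; exact hyQ ⟨q, rfl⟩)
    filter_upwards [hVy this] with q hq
    by_contra h
    exact hq ⟨q, h, rfl⟩
  rcases hSF hf with (⟨M, hM⟩ | ⟨z, rfl⟩) | rfl
  · exact V.exists_tendsto_of_abs_le hM
  · have hzy : y ≠ z := fun h => hyZ (h ▸ hf)
    exact ⟨_, ((continuousAt_id.sub continuousAt_const).abs.inv₀
      (by simpa [sub_eq_zero])).tendsto.comp hVy⟩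
  · exact ⟨_, (continuous_abs.tendsto y).comp hVy⟩

lemma isClosed_range_swap_of_range_eq_ratFamily {ι : Type*} {σ : ι → ℚ → ℝ}
    (hσ : range σ = ratFamily) : IsClosed (range (swap σ)) := by
  refine isClosed_range_of_forall_ultrafilter fun V hV p hp => ?_
  obtain ⟨f, hf, hnot⟩ := exists_not_tendsto_of_le_cofinite V hV
  obtain ⟨i, rfl⟩ : f ∈ range σ := hσ ▸ hf
  exact hnot _ (tendsto_pi_nhds.1 hp i)

end RatFamily

/-- If `ι` has cardinality `𝔠 = 2^{ℵ₀}`, then `ℝ^ι` contains a closed copy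
`N` of `ℕ` that is C*-embedded but not C-embedded in `ℝ^ι`. -/
theorem statement18 (ι : Type*) (hι : Cardinal.mk ι = Cardinal.continuum) :
    ∃ N : Set (ι → ℝ), ClosedCopyOfNat N ∧ CstarEmbedded N ∧ ¬ CEmbedded N := by
  obtain ⟨σ, hσ⟩ := exists_range_eq_ratFamily hι.ge
  obtain ⟨c⟩ : Nonempty (ι ↪ ℝ) := by
    rw [← Cardinal.lift_mk_le']
    simp [hι, Cardinal.mk_real]
  have := separableSpace_pi_real_of_injective c.injective
  have hb : ∀ f : ℚ → ℝ, (∃ M, ∀ q, |f q| ≤ M) → f ∈ range σ := fun f hf =>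
    hσ ▸ Or.inl (Or.inl hf)
  refine ⟨range (swap σ), ⟨countable_range _,
    infinite_range_of_injective (injective_swap hb),
    isClosed_range_swap_of_range_eq_ratFamily hσ, discreteTopology_range_swap hb⟩,
    cstarEmbedded_range_swap hb, not_cEmbedded_range_swap hb fun S hS => ?_⟩
  obtain ⟨V, hV, hlim⟩ :=
    exists_ultrafilter_forall_tendsto (hS.image σ) (hσ ▸ image_subset_range σ S)
  exact ⟨V, hV, fun i hi => hlim _ (mem_image_of_mem σ hi)⟩
end
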